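/- arXiv:2211.04385 — 7 statements merged into one kernel-verified Lean document; each statement's English description precedes it below -/
import Mathlib

section
/- Let n, η be positive integers and let a_1, …, a_n, t ∈ ℤ satisfy |a_i| ≤ 2^η for every i and |t| ≤ 2^η, and suppose that for every z ∈ {0,1}^n one has Σ_{i=1}^n z_i a_i ≠ t. Let P be the set of primes lying in the interval [2^{10n+2⌈log₂ η⌉+10}, 2^{20n+2⌈log₂ η⌉+10}], and assume |P| ≥ η · 2^{20n}. Then the set B = {q ∈ P : there exists z ∈ {0,1}^n with Σ_{i=1}^n z_i a_i ≡ t (mod q)} satisfies 2^{18n} · |B| ≤ |P|; that is, a uniformly random prime from P is 'bad' with probability at most 2^{−18n}. -/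
/-!
Every subset sum differs from `t` by a nonzero integer of absolute value at most `2 ^ (n + η)`,
and such an integer has at most `n + η` distinct prime factors. A bad prime divides one of these
`2 ^ n` differences, so there are at most `2 ^ n (n + η) ≤ η 2 ^ (2n)` bad primes, a `2 ^ (-18n)`
fraction of the at least `η 2 ^ (20n)` primes of `P`.
-/

open Finset

lemma Nat.two_pow_card_primeFactors_le {m : ℕ} (hm : m ≠ 0) : 2 ^ #m.primeFactors ≤ m :=
  calc 2 ^ #m.primeFactors ≤ ∏ p ∈ m.primeFactors, p :=
        pow_card_le_prod _ _ _ fun _ hp => (Nat.prime_of_mem_primeFactors hp).two_le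
    _ ≤ m := Nat.le_of_dvd (Nat.pos_of_ne_zero hm) (Nat.prod_primeFactors_dvd m)

lemma Nat.card_primeFactors_le_of_le_two_pow {m k : ℕ} (hm : m ≠ 0) (hmk : m ≤ 2 ^ k) :
    #m.primeFactors ≤ k :=
  (Nat.pow_le_pow_iff_right (by norm_num)).mp ((two_pow_card_primeFactors_le hm).trans hmk)

lemma Nat.add_le_mul_two_pow {n η : ℕ} (hη : 0 < η) : n + η ≤ η * 2 ^ n :=
  calc n + η ≤ η * (n + 1) := by nlinarith
    _ ≤ η * 2 ^ n := Nat.mul_le_mul_left η (Nat.lt_two_pow_self (n := n))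

section SubsetSum

variable {ι : Type*} [Fintype ι] (a : ι → ℤ) (t : ℤ)

lemma exists_zero_one_sum_iff_exists_finset (p : ℤ → Prop) :
    (∃ z : ι → ℤ, (∀ i, z i = 0 ∨ z i = 1) ∧ p (∑ i, z i * a i)) ↔
      ∃ s : Finset ι, p (∑ i ∈ s, a i) := by
  classical
  constructor
  · rintro ⟨z, hz, hp⟩
    refine ⟨univ.filter (z · = 1), ?_⟩
    convert hp using 1
    rw [sum_filter]
    refine sum_congr rfl fun i _ => ?_
    rcases hz i with h | h <;> simp [h]
  · rintro ⟨s, hp⟩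
    refine ⟨fun i => if i ∈ s then 1 else 0, fun i => by by_cases hi : i ∈ s <;> simp [hi], ?_⟩
    simpa [ite_mul, sum_ite_mem] using hp

lemma abs_sum_sub_le_two_pow {η : ℕ} (ha : ∀ i, |a i| ≤ 2 ^ η) (ht : |t| ≤ 2 ^ η)
    (s : Finset ι) : |∑ i ∈ s, a i - t| ≤ 2 ^ (Fintype.card ι + η) := by
  have hcard : (#s : ℤ) + 1 ≤ 2 ^ Fintype.card ι := by
    exact_mod_cast (card_le_univ s).trans_lt Nat.lt_two_pow_self
  calc |∑ i ∈ s, a i - t| ≤ ∑ i ∈ s, |a i| + |t| :=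
        (abs_sub _ _).trans (add_le_add_left (abs_sum_le_sum_abs _ _) _)
    _ ≤ ∑ _i ∈ s, (2 : ℤ) ^ η + 2 ^ η := by gcongr with i; exact ha i
    _ = (#s + 1) * 2 ^ η := by rw [sum_const, nsmul_eq_mul]; ring
    _ ≤ 2 ^ (Fintype.card ι + η) := by rw [pow_add]; gcongr

/-- The bad primes, provided no subset sums to `t` exactly: a zero difference would contribute
no primes, since `Nat.primeFactors 0 = ∅`. -/
def subsetSumBadPrimes : Finset ℕ :=
  univ.biUnion fun s : Finset ι => (∑ i ∈ s, a i - t).natAbs.primeFactors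

variable {a t}

lemma mem_subsetSumBadPrimes (hno : ∀ s : Finset ι, ∑ i ∈ s, a i ≠ t) {q : ℕ} :
    q ∈ subsetSumBadPrimes a t ↔ q.Prime ∧ ∃ s : Finset ι, (q : ℤ) ∣ ∑ i ∈ s, a i - t := by
  simp [subsetSumBadPrimes, Nat.mem_primeFactors, Int.natCast_dvd, sub_eq_zero, hno]

lemma card_subsetSumBadPrimes_le {η : ℕ} (ha : ∀ i, |a i| ≤ 2 ^ η) (ht : |t| ≤ 2 ^ η)
    (hno : ∀ s : Finset ι, ∑ i ∈ s, a i ≠ t) :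
    #(subsetSumBadPrimes a t) ≤ 2 ^ Fintype.card ι * (Fintype.card ι + η) := by
  have hfactors (s : Finset ι) :
      #(∑ i ∈ s, a i - t).natAbs.primeFactors ≤ Fintype.card ι + η := by
    refine Nat.card_primeFactors_le_of_le_two_pow (by simpa [sub_eq_zero] using hno s) ?_
    have := abs_sum_sub_le_two_pow a t ha ht s
    rw [Int.abs_eq_natAbs] at this
    exact_mod_cast this
  calc #(subsetSumBadPrimes a t)
        ≤ ∑ s : Finset ι, #(∑ i ∈ s, a i - t).natAbs.primeFactors := card_biUnion_le
    _ ≤ ∑ _s : Finset ι, (Fintype.card ι + η) := sum_le_sum fun s _ => hfactors s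
    _ = 2 ^ Fintype.card ι * (Fintype.card ι + η) := by simp

end SubsetSum

theorem stmt_2_general (n η : ℕ) (hη : 0 < η)
    (a : Fin n → ℤ) (t : ℤ)
    (ha : ∀ i, |a i| ≤ 2 ^ η) (ht : |t| ≤ 2 ^ η)
    (hno : ∀ z : Fin n → ℤ, (∀ i, z i = 0 ∨ z i = 1) → ∑ i, z i * a i ≠ t)
    (P : Set ℕ)
    (hP : P = {q : ℕ | q.Prime ∧
      q ∈ Set.Icc (2 ^ (10 * n + 2 * Nat.clog 2 η + 10)) (2 ^ (20 * n + 2 * Nat.clog 2 η + 10))})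
    (hPcard : η * 2 ^ (20 * n) ≤ P.ncard) :
    2 ^ (18 * n) * {q ∈ P | ∃ z : Fin n → ℤ, (∀ i, z i = 0 ∨ z i = 1) ∧
        (q : ℤ) ∣ (∑ i, z i * a i) - t}.ncard ≤ P.ncard := by
  have hno' (s : Finset (Fin n)) : ∑ i ∈ s, a i ≠ t := fun hs => by
    obtain ⟨z, hz, hzt⟩ := (exists_zero_one_sum_iff_exists_finset a (· = t)).2 ⟨s, hs⟩
    exact hno z hz hzt
  have hbad : {q ∈ P | ∃ z : Fin n → ℤ, (∀ i, z i = 0 ∨ z i = 1) ∧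
      (q : ℤ) ∣ (∑ i, z i * a i) - t} ⊆ subsetSumBadPrimes a t := by
    rintro q ⟨hqP, hq⟩
    rw [hP] at hqP
    exact (mem_subsetSumBadPrimes hno').2
      ⟨hqP.1, (exists_zero_one_sum_iff_exists_finset a (fun x => (q : ℤ) ∣ x - t)).1 hq⟩
  have hcard := card_subsetSumBadPrimes_le ha ht hno'
  rw [Fintype.card_fin] at hcard
  calc 2 ^ (18 * n) * _ ≤ 2 ^ (18 * n) * (2 ^ n * (n + η)) := by
        gcongr
        exact (Set.ncard_le_ncard hbad).trans (by simpa using hcard)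
    _ ≤ 2 ^ (18 * n) * (2 ^ n * (η * 2 ^ n)) := by gcongr; exact Nat.add_le_mul_two_pow hη
    _ = η * 2 ^ (20 * n) := by ring
    _ ≤ P.ncard := hPcard

/-- For a NO instance of Subset-Sum with `|a_i|, |t| ≤ 2^η`, letting `P` be the set
of primes in `[2^{10n+2⌈log₂ η⌉+10}, 2^{20n+2⌈log₂ η⌉+10}]` and assuming `|P| ≥ η · 2^{20n}`,
the set `B ⊆ P` of "bad" primes (those for which some `0/1`-combination of the `a_i` becomes
congruent to `t`) satisfies `2^{18n} · |B| ≤ |P|`. -/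
theorem stmt_2 (n η : ℕ) (hn : 0 < n) (hη : 0 < η)
    (a : Fin n → ℤ) (t : ℤ)
    (ha : ∀ i, |a i| ≤ 2 ^ η) (ht : |t| ≤ 2 ^ η)
    (hno : ∀ z : Fin n → ℤ, (∀ i, z i = 0 ∨ z i = 1) → ∑ i, z i * a i ≠ t)
    (P : Set ℕ)
    (hP : P = {q : ℕ | q.Prime ∧
      q ∈ Set.Icc (2 ^ (10 * n + 2 * Nat.clog 2 η + 10)) (2 ^ (20 * n + 2 * Nat.clog 2 η + 10))})
    (hPcard : η * 2 ^ (20 * n) ≤ P.ncard) :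
    2 ^ (18 * n) * {q ∈ P | ∃ z : Fin n → ℤ, (∀ i, z i = 0 ∨ z i = 1) ∧
        (q : ℤ) ∣ (∑ i, z i * a i) - t}.ncard ≤ P.ncard :=
  stmt_2_general n η hη a t ha ht hno P hP hPcard
end

section
/- Let m ≥ n ≥ 1 and let c_1, …, c_n ∈ ℝ^m be linearly independent vectors whose Gram–Schmidt orthogonalization c*_1, …, c*_n satisfies the LLL reducedness conditions: |μ_{ij}| ≤ 1/2 for all 1 ≤ j < i ≤ n, and ‖c*_i‖₂² ≥ ½‖c*_{i−1}‖₂² for all 1 < i ≤ n. Let t′ ∈ ℝ^m be such that for every i ∈ {1,…,n} the coefficient x*_i = ⟨t′, c*_i⟩/⟨c*_i, c*_i⟩ lies in the half-open interval (−1/2, 1/2]. If z ∈ ℤ^n is such that Σ_{i=1}^n z_i c_i is a closest lattice point to t′ in the Euclidean norm, i.e., ‖Σ_i z_i c_i − t′‖₂ ≤ ‖Σ_i y_i c_i − t′‖₂ for every y ∈ ℤ^n, then max_i |z_i| < 2^{n²}. -/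
/-!
Put `d = ∑ zᵢ cᵢ - t'` and `c*ₖ = gramSchmidt ℝ c k`. Comparing with the lattice points
`z ± eₖ` gives `|⟪d, cₖ⟫| ≤ ‖cₖ‖² / 2`. The LLL conditions make `k ↦ 2ᵏ ‖c*ₖ‖²` monotone, hence
`‖cₖ‖² ≤ 2ᵏ ‖c*ₖ‖²`, and expanding `cₖ` in the Gram–Schmidt basis turns the first bound into the
recursion `|⟪d, c*ⱼ⟫| ≤ 2ᵏ ‖c*ₖ‖² / 2 + ½ ∑_{i<j} |⟪d, c*ᵢ⟫|` for `j ≤ k`. A discrete Grönwall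
inequality solves it: `|⟪d, c*ₖ⟫| ≤ 4ᵏ ‖c*ₖ‖² / 2`. Reading off the `c*ₖ`-coefficient of `d`
then gives `|zₖ| ≤ 4ⁿ⁻¹ + ½ ∑_{i>k} |zᵢ|`, and the same inequality, run downwards, yields
`|zₖ| ≤ 2ⁿ⁻¹ 4ⁿ⁻¹ < 2^(n²)`.
-/

open scoped RealInnerProductSpace

/-- The Gram–Schmidt orthogonalization of a family of vectors indexed by `Fin n`
(instances given explicitly to aid elaboration). -/
noncomputable def gso {m n : ℕ} (c : Fin n → EuclideanSpace ℝ (Fin m)) :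
    Fin n → EuclideanSpace ℝ (Fin m) :=
  @InnerProductSpace.gramSchmidt ℝ _ _ _ _ (Fin n) Fin.instLinearOrder (Fin.instLocallyFiniteOrderBot n)
    IsWellOrder.toIsWellFounded c

open Finset InnerProductSpace

theorem Fin.sum_Iio_eq_sum_range {M : Type*} [AddCommMonoid M] {n : ℕ} (f : ℕ → M) (k : Fin n) :
    ∑ i ∈ Iio k, f i = ∑ i ∈ range k, f i := by
  rw [← Nat.Iio_eq_range, ← Fin.map_valEmbedding_Iio, sum_map]
  rfl

theorem Fin.sum_Ioi_eq_sum_Iio_rev {M : Type*} [AddCommMonoid M] {n : ℕ} (f : Fin n → M)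
    (k : Fin n) : ∑ i ∈ Ioi k, f i = ∑ i ∈ Iio k.rev, f i.rev := by
  rw [← Fin.rev_rev k, ← Fin.map_revPerm_Iio, sum_map, Fin.rev_rev]
  rfl

theorem Fin.monotone_of_le_of_val_add_one_eq {α : Type*} [Preorder α] {n : ℕ} {a : Fin n → α}
    (h : ∀ i j : Fin n, (j : ℕ) + 1 = i → a j ≤ a i) : Monotone a := by
  cases n with
  | zero => exact fun i => i.elim0
  | succ n => exact Fin.monotone_iff_le_succ.2 fun i => h _ _ (by simp)

theorem Fin.le_two_pow_mul_of_le_add_half_sum {n : ℕ} {a : Fin n → ℝ} {B : ℝ} (hB : 0 ≤ B)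
    {k : Fin n} (h : ∀ j ≤ k, a j ≤ B + (∑ i ∈ Iio j, a i) / 2) : a k ≤ 2 ^ (k : ℕ) * B := by
  induction k using WellFoundedLT.induction with
  | _ k ih =>
    have hgeom : ∑ i ∈ Iio k, (2 : ℝ) ^ (i : ℕ) = 2 ^ (k : ℕ) - 1 := by
      rw [Fin.sum_Iio_eq_sum_range (fun i => (2 : ℝ) ^ i), geom_sum_eq (by norm_num)]
      norm_num
    have hone : (1 : ℝ) ≤ 2 ^ (k : ℕ) := one_le_pow₀ (by norm_num)
    calc a k ≤ B + (∑ i ∈ Iio k, a i) / 2 := h k le_rfl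
      _ ≤ B + (∑ i ∈ Iio k, 2 ^ (i : ℕ) * B) / 2 := by
        gcongr with i hi
        exact ih i (mem_Iio.1 hi) fun j hj => h j (hj.trans (mem_Iio.1 hi).le)
      _ = B + (2 ^ (k : ℕ) - 1) * B / 2 := by rw [← sum_mul, hgeom]
      _ ≤ 2 ^ (k : ℕ) * B := by nlinarith

theorem Fin.le_two_pow_rev_mul_of_le_add_half_sum {n : ℕ} {a : Fin n → ℝ} {B : ℝ} (hB : 0 ≤ B)
    (h : ∀ j, a j ≤ B + (∑ i ∈ Ioi j, a i) / 2) (k : Fin n) : a k ≤ 2 ^ (k.rev : ℕ) * B := by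
  simpa using Fin.le_two_pow_mul_of_le_add_half_sum (a := fun i => a i.rev) hB (k := k.rev)
    fun j _ => by simpa [Fin.sum_Ioi_eq_sum_Iio_rev] using h j.rev

section

variable {E : Type*} [NormedAddCommGroup E] [InnerProductSpace ℝ E]

theorem abs_inner_le_half_norm_sq_of_norm_le {d v : E} (hadd : ‖d‖ ≤ ‖d + v‖)
    (hsub : ‖d‖ ≤ ‖d - v‖) : |⟪d, v⟫| ≤ ‖v‖ ^ 2 / 2 := by
  have hadd' := pow_le_pow_left₀ (norm_nonneg d) hadd 2
  have hsub' := pow_le_pow_left₀ (norm_nonneg d) hsub 2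
  rw [norm_add_sq_real] at hadd'
  rw [norm_sub_sq_real] at hsub'
  rw [abs_le]
  constructor <;> linarith

theorem abs_inner_sub_le_half_norm_sq_of_forall_norm_sub_le {ι : Type*} [Fintype ι] [DecidableEq ι]
    {c : ι → E} {t : E} {z : ι → ℤ}
    (hz : ∀ y : ι → ℤ, ‖∑ i, (z i : ℝ) • c i - t‖ ≤ ‖∑ i, (y i : ℝ) • c i - t‖) (k : ι) :
    |⟪∑ i, (z i : ℝ) • c i - t, c k⟫| ≤ ‖c k‖ ^ 2 / 2 := by
  have hmove (s : ℤ) : ∑ i, ((z + Pi.single k s : ι → ℤ) i : ℝ) • c i - t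
      = (∑ i, (z i : ℝ) • c i - t) + (s : ℝ) • c k := by
    simp [add_smul, sum_add_distrib, Pi.single_apply, ite_smul, add_sub_right_comm]
  apply abs_inner_le_half_norm_sq_of_norm_le
  · have h := hz (z + Pi.single k 1)
    rwa [hmove, Int.cast_one, one_smul] at h
  · have h := hz (z + Pi.single k (-1))
    rwa [hmove, Int.cast_neg, Int.cast_one, neg_one_smul, ← sub_eq_add_neg] at h

section GramSchmidt

variable {ι : Type*} [LinearOrder ι] [LocallyFiniteOrderBot ι] [WellFoundedLT ι] (f : ι → E)

theorem inner_eq_inner_gramSchmidt_add_sum (x : E) (k : ι) :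
    ⟪x, f k⟫ = ⟪x, gramSchmidt ℝ f k⟫ + ∑ j ∈ Iio k,
      ⟪f k, gramSchmidt ℝ f j⟫ / ‖gramSchmidt ℝ f j‖ ^ 2 * ⟪x, gramSchmidt ℝ f j⟫ := by
  conv_lhs => rw [gramSchmidt_def'' ℝ f k]
  simp only [inner_add_right, inner_sum, real_inner_smul_right, RCLike.ofReal_real_eq_id, id,
    real_inner_comm (f k)]

theorem inner_gramSchmidt_self (k : ι) : ⟪gramSchmidt ℝ f k, f k⟫ = ‖gramSchmidt ℝ f k‖ ^ 2 := by
  rw [inner_eq_inner_gramSchmidt_add_sum, real_inner_self_eq_norm_sq, add_eq_left]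
  refine sum_eq_zero fun j hj => ?_
  rw [gramSchmidt_orthogonal ℝ f (mem_Iio.1 hj).ne', mul_zero]

theorem norm_sq_le_of_abs_inner_gramSchmidt_le {k : ι}
    (h : ∀ j < k, |⟪f k, gramSchmidt ℝ f j⟫| ≤ ‖gramSchmidt ℝ f j‖ ^ 2 / 2) :
    ‖f k‖ ^ 2 ≤ ‖gramSchmidt ℝ f k‖ ^ 2 + (∑ j ∈ Iio k, ‖gramSchmidt ℝ f j‖ ^ 2) / 4 := by
  rw [← real_inner_self_eq_norm_sq, inner_eq_inner_gramSchmidt_add_sum, real_inner_comm,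
    inner_gramSchmidt_self, sum_div]
  gcongr with j hj
  have hj := h j (mem_Iio.1 hj)
  rw [div_mul_eq_mul_div, ← sq]
  apply div_le_of_le_mul₀ (by positivity) (by positivity)
  nlinarith [sq_abs ⟪f k, gramSchmidt ℝ f j⟫, abs_nonneg ⟪f k, gramSchmidt ℝ f j⟫]

end GramSchmidt

section LLL

variable {n : ℕ} {c : Fin n → E}

structure IsLLLReduced (c : Fin n → E) : Prop where
  abs_inner_le : ∀ i j, j < i → |⟪c i, gramSchmidt ℝ c j⟫| ≤ ‖gramSchmidt ℝ c j‖ ^ 2 / 2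
  norm_sq_le_two_mul : ∀ i j : Fin n, (j : ℕ) + 1 = i →
    ‖gramSchmidt ℝ c j‖ ^ 2 ≤ 2 * ‖gramSchmidt ℝ c i‖ ^ 2

namespace IsLLLReduced

theorem monotone_two_pow_mul_norm_sq (hc : IsLLLReduced c) :
    Monotone fun k : Fin n => 2 ^ (k : ℕ) * ‖gramSchmidt ℝ c k‖ ^ 2 :=
  Fin.monotone_of_le_of_val_add_one_eq fun i j hij => by
    rw [← hij, pow_succ (2 : ℝ) (j : ℕ), mul_assoc]
    exact mul_le_mul_of_nonneg_left (hc.norm_sq_le_two_mul i j hij) (by positivity)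

theorem norm_sq_le (hc : IsLLLReduced c) (k : Fin n) :
    ‖c k‖ ^ 2 ≤ 2 ^ (k : ℕ) * ‖gramSchmidt ℝ c k‖ ^ 2 := by
  set s := 2 ^ (k : ℕ) * ‖gramSchmidt ℝ c k‖ ^ 2
  have hhalf (j : Fin n) : ‖gramSchmidt ℝ c j‖ ^ 2
      = (1 / 2) ^ (j : ℕ) * (2 ^ (j : ℕ) * ‖gramSchmidt ℝ c j‖ ^ 2) := by
    rw [← mul_assoc, ← mul_pow]
    norm_num
  have hgeom : ∑ j ∈ Iio k, (1 / 2 : ℝ) ^ (j : ℕ) = 2 - 2 * (1 / 2) ^ (k : ℕ) := by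
    rw [Fin.sum_Iio_eq_sum_range (fun j => (1 / 2 : ℝ) ^ j), geom_sum_eq (by norm_num)]
    ring
  have hsmall : (1 / 2 : ℝ) ^ (k : ℕ) ≤ 1 := pow_le_one₀ (by norm_num) (by norm_num)
  calc ‖c k‖ ^ 2 ≤ ‖gramSchmidt ℝ c k‖ ^ 2 + (∑ j ∈ Iio k, ‖gramSchmidt ℝ c j‖ ^ 2) / 4 :=
        norm_sq_le_of_abs_inner_gramSchmidt_le c (hc.abs_inner_le k)
    _ ≤ ‖gramSchmidt ℝ c k‖ ^ 2 + (∑ j ∈ Iio k, (1 / 2) ^ (j : ℕ) * s) / 4 := by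
        gcongr with j hj
        rw [hhalf j]
        gcongr
        exact hc.monotone_two_pow_mul_norm_sq (mem_Iio.1 hj).le
    _ ≤ s := by
        rw [← sum_mul, hgeom, hhalf k]
        nlinarith [show 0 ≤ s by positivity]

theorem abs_inner_gramSchmidt_le (hc : IsLLLReduced c) {d : E}
    (hd : ∀ k, |⟪d, c k⟫| ≤ ‖c k‖ ^ 2 / 2) (k : Fin n) :
    |⟪d, gramSchmidt ℝ c k⟫| ≤ 4 ^ (k : ℕ) * ‖gramSchmidt ℝ c k‖ ^ 2 / 2 := by
  have hcoeff (i j : Fin n) (hji : j < i) :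
      |⟪c i, gramSchmidt ℝ c j⟫ / ‖gramSchmidt ℝ c j‖ ^ 2| ≤ 1 / 2 := by
    rw [abs_div, abs_of_nonneg (sq_nonneg ‖gramSchmidt ℝ c j‖)]
    exact div_le_of_le_mul₀ (sq_nonneg _) (by norm_num) (by linarith [hc.abs_inner_le i j hji])
  have hstep : ∀ j ≤ k, |⟪d, gramSchmidt ℝ c j⟫|
      ≤ 2 ^ (k : ℕ) * ‖gramSchmidt ℝ c k‖ ^ 2 / 2
        + (∑ i ∈ Iio j, |⟪d, gramSchmidt ℝ c i⟫|) / 2 := by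
    intro j hjk
    set S := ∑ i ∈ Iio j, ⟪c j, gramSchmidt ℝ c i⟫ / ‖gramSchmidt ℝ c i‖ ^ 2
      * ⟪d, gramSchmidt ℝ c i⟫
    have hS : |S| ≤ (∑ i ∈ Iio j, |⟪d, gramSchmidt ℝ c i⟫|) / 2 := by
      rw [sum_div]
      refine (abs_sum_le_sum_abs _ _).trans (sum_le_sum fun i hi => ?_)
      rw [abs_mul]
      nlinarith [hcoeff j i (mem_Iio.1 hi), abs_nonneg ⟪d, gramSchmidt ℝ c i⟫]
    have hdj : |⟪d, gramSchmidt ℝ c j⟫ + S| ≤ 2 ^ (k : ℕ) * ‖gramSchmidt ℝ c k‖ ^ 2 / 2 := by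
      rw [← inner_eq_inner_gramSchmidt_add_sum]
      refine (hd j).trans (div_le_div_of_nonneg_right ?_ zero_le_two)
      exact (hc.norm_sq_le j).trans (hc.monotone_two_pow_mul_norm_sq hjk)
    calc |⟪d, gramSchmidt ℝ c j⟫| = |(⟪d, gramSchmidt ℝ c j⟫ + S) - S| := by
          rw [add_sub_cancel_right]
      _ ≤ |⟪d, gramSchmidt ℝ c j⟫ + S| + |S| := abs_sub _ _
      _ ≤ _ := add_le_add hdj hS
  calc |⟪d, gramSchmidt ℝ c k⟫| ≤ 2 ^ (k : ℕ) * (2 ^ (k : ℕ) * ‖gramSchmidt ℝ c k‖ ^ 2 / 2) :=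
        Fin.le_two_pow_mul_of_le_add_half_sum (a := fun j => |⟪d, gramSchmidt ℝ c j⟫|)
          (by positivity) hstep
    _ = 4 ^ (k : ℕ) * ‖gramSchmidt ℝ c k‖ ^ 2 / 2 := by
      rw [show (4 : ℝ) = 2 * 2 by norm_num, mul_pow]
      ring

end IsLLLReduced

theorem inner_sum_smul_gramSchmidt (z : Fin n → ℝ) (k : Fin n) :
    ⟪∑ i, z i • c i, gramSchmidt ℝ c k⟫
      = z k * ‖gramSchmidt ℝ c k‖ ^ 2 + ∑ i ∈ Ioi k, z i * ⟪c i, gramSchmidt ℝ c k⟫ := by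
  simp only [sum_inner, real_inner_smul_left]
  rw [← sum_subset (subset_univ (Ici k)), ← Ioi_insert, sum_insert (by simp), real_inner_comm,
    inner_gramSchmidt_self]
  intro i _ hi
  rw [real_inner_comm, gramSchmidt_inv_triangular ℝ c (by simpa using hi), mul_zero]

theorem IsLLLReduced.abs_le_of_abs_inner_sub_le (hc : IsLLLReduced c)
    (hli : LinearIndependent ℝ c) {t : E}
    (ht : ∀ k, |⟪t, gramSchmidt ℝ c k⟫| ≤ ‖gramSchmidt ℝ c k‖ ^ 2 / 2) {z : Fin n → ℝ}
    (hz : ∀ k, |⟪∑ i, z i • c i - t, c k⟫| ≤ ‖c k‖ ^ 2 / 2) (k : Fin n) :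
    |z k| ≤ 2 ^ (k.rev : ℕ) * 4 ^ (n - 1) := by
  refine Fin.le_two_pow_rev_mul_of_le_add_half_sum (a := fun i => |z i|) (by positivity)
    (fun j => ?_) k
  set r := ‖gramSchmidt ℝ c j‖ ^ 2
  have hr : 0 < r := by positivity [gramSchmidt_ne_zero j hli]
  have hu := hc.abs_inner_gramSchmidt_le hz j
  rw [inner_sub_left, inner_sum_smul_gramSchmidt] at hu
  have hS : |∑ i ∈ Ioi j, z i * ⟪c i, gramSchmidt ℝ c j⟫| ≤ (∑ i ∈ Ioi j, |z i|) / 2 * r := by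
    rw [sum_div, sum_mul]
    refine (abs_sum_le_sum_abs _ _).trans (sum_le_sum fun i hi => ?_)
    rw [abs_mul]
    nlinarith [hc.abs_inner_le i j (mem_Ioi.1 hi), abs_nonneg (z i)]
  have h4 : (4 : ℝ) ^ (j : ℕ) * r ≤ 4 ^ (n - 1) * r :=
    mul_le_mul_of_nonneg_right (pow_le_pow_right₀ (by norm_num) (by omega)) hr.le
  have hone : r ≤ 4 ^ (j : ℕ) * r := le_mul_of_one_le_left hr.le (one_le_pow₀ (by norm_num))
  obtain ⟨hu₁, hu₂⟩ := abs_le.1 hu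
  obtain ⟨hS₁, hS₂⟩ := abs_le.1 hS
  obtain ⟨ht₁, ht₂⟩ := abs_le.1 (ht j)
  have hzr : |z j * r| ≤ (4 ^ (n - 1) + (∑ i ∈ Ioi j, |z i|) / 2) * r := by
    rw [abs_le]
    constructor <;> linarith
  rw [abs_mul, abs_of_pos hr] at hzr
  exact le_of_mul_le_mul_right hzr hr

end LLL

end

theorem two_pow_pred_mul_four_pow_pred_lt {n : ℕ} (hn : 0 < n) :
    (2 : ℝ) ^ (n - 1) * 4 ^ (n - 1) < 2 ^ (n ^ 2) := by
  obtain ⟨m, rfl⟩ := Nat.exists_eq_add_of_lt hn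
  rw [show (4 : ℝ) = 2 ^ 2 by norm_num, ← pow_mul, ← pow_add]
  refine pow_lt_pow_right₀ (by norm_num) ?_
  simp only [zero_add, Nat.add_sub_cancel]
  nlinarith [Nat.le_self_pow two_ne_zero m]

theorem abs_le_half_mul_of_abs_div_le {a r : ℝ} (hr : 0 < r) (h : |a / r| ≤ 1 / 2) :
    |a| ≤ r / 2 := by
  rw [abs_div, abs_of_pos hr, div_le_iff₀ hr] at h
  linarith

theorem stmt_4_general (m n : ℕ)
    (c : Fin n → EuclideanSpace ℝ (Fin m)) (hc : LinearIndependent ℝ c)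
    (hμ : ∀ i j : Fin n, j < i →
      abs (⟪c i, gso c j⟫ / ⟪gso c j, gso c j⟫) ≤ 1 / 2)
    (hred : ∀ i j : Fin n, (j : ℕ) + 1 = (i : ℕ) →
      ‖gso c i‖ ^ 2 ≥ (1 / 2) * ‖gso c j‖ ^ 2)
    (t' : EuclideanSpace ℝ (Fin m))
    (ht' : ∀ i : Fin n,
      ⟪t', gso c i⟫ / ⟪gso c i, gso c i⟫ ∈ Set.Ioc (-(1/2) : ℝ) (1/2))
    (z : Fin n → ℤ)
    (hz : ∀ y : Fin n → ℤ,
      ‖(∑ i, (z i : ℝ) • c i) - t'‖ ≤ ‖(∑ i, (y i : ℝ) • c i) - t'‖) :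
    ∀ i, |z i| < 2 ^ (n ^ 2) := by
  intro k
  have hgso : gso c = gramSchmidt ℝ c := rfl
  simp only [hgso, real_inner_self_eq_norm_sq] at hμ hred ht'
  have hr (j : Fin n) : 0 < ‖gramSchmidt ℝ c j‖ ^ 2 := by positivity [gramSchmidt_ne_zero j hc]
  have hlll : IsLLLReduced c :=
    ⟨fun i j hji => abs_le_half_mul_of_abs_div_le (hr j) (hμ i j hji),
      fun i j hij => by linarith [hred i j hij]⟩
  have hbound := hlll.abs_le_of_abs_inner_sub_le hc
    (fun j => abs_le_half_mul_of_abs_div_le (hr j) (abs_le.2 ⟨(ht' j).1.le, (ht' j).2⟩))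
    (abs_inner_sub_le_half_norm_sq_of_forall_norm_sub_le hz) k
  have hrev : (2 : ℝ) ^ (k.rev : ℕ) ≤ 2 ^ (n - 1) :=
    pow_le_pow_right₀ (by norm_num) (by simp only [Fin.val_rev]; omega)
  have hlt := (hbound.trans (by gcongr)).trans_lt (two_pow_pred_mul_four_pow_pred_lt k.pos)
  exact_mod_cast hlt

/-- If `c_1, …, c_n ∈ ℝ^m` are linearly independent with LLL-reduced
Gram–Schmidt data (`|μ_{ij}| ≤ 1/2` for `j < i` and `‖c*_i‖² ≥ ½‖c*_{i−1}‖²`), and the target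
`t'` has all its Gram–Schmidt coefficients `⟪t', c*_i⟫/⟪c*_i, c*_i⟫` in `(−1/2, 1/2]`, then
the coefficient vector `z ∈ ℤⁿ` of any closest lattice point `∑ z_i c_i` to `t'` in the
Euclidean norm satisfies `max_i |z_i| < 2^{n²}`. -/
theorem stmt_4 (m n : ℕ) (hn : 1 ≤ n) (hmn : n ≤ m)
    (c : Fin n → EuclideanSpace ℝ (Fin m)) (hc : LinearIndependent ℝ c)
    (hμ : ∀ i j : Fin n, j < i →
      abs (⟪c i, gso c j⟫ / ⟪gso c j, gso c j⟫) ≤ 1 / 2)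
    (hred : ∀ i j : Fin n, (j : ℕ) + 1 = (i : ℕ) →
      ‖gso c i‖ ^ 2 ≥ (1 / 2) * ‖gso c j‖ ^ 2)
    (t' : EuclideanSpace ℝ (Fin m))
    (ht' : ∀ i : Fin n,
      ⟪t', gso c i⟫ / ⟪gso c i, gso c i⟫ ∈ Set.Ioc (-(1/2) : ℝ) (1/2))
    (z : Fin n → ℤ)
    (hz : ∀ y : Fin n → ℤ,
      ‖(∑ i, (z i : ℝ) • c i) - t'‖ ≤ ‖(∑ i, (y i : ℝ) • c i) - t'‖) :
    ∀ i, |z i| < 2 ^ (n ^ 2) :=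
  stmt_4_general m n c hc hμ hred t' ht' z hz
end

section
/- Let m ≥ n ≥ 1 and let c_1, …, c_n ∈ ℝ^m be linearly independent vectors whose Gram–Schmidt orthogonalization c*_1, …, c*_n satisfies the LLL reducedness conditions: |μ_{ij}| ≤ 1/2 for all 1 ≤ j < i ≤ n, and ‖c*_i‖₂² ≥ ½‖c*_{i−1}‖₂² for all 1 < i ≤ n. Let t′ ∈ ℝ^m be such that for every i ∈ {1,…,n} the coefficient x*_i = ⟨t′, c*_i⟩/⟨c*_i, c*_i⟩ lies in (−1/2, 1/2]. If z ∈ ℤ^n is such that ‖Σ_i z_i c_i − t′‖₂ ≤ ‖Σ_i y_i c_i − t′‖₂ for every y ∈ ℤ^n, then for every i ∈ {1, …, n} one has |z_{n−i+1}| ≤ 2^{n·i}. -/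
open scoped RealInnerProductSpace

/-!
In the Gram–Schmidt basis the lattice vector `∑ bᵢ cᵢ` has `j`-th coordinate
`bⱼ + ∑_{i > j} bᵢ μᵢⱼ`, so its squared distance to `t'` is `∑ⱼ (that - x*ⱼ)² ‖c*ⱼ‖²` up to a
constant. Rounding the coordinates of a closest `z` from position `j` downwards (Babai's nearest
plane) gives a lattice vector that agrees with `z` above `j` and is within `1/2` in every coordinate
up to `j`; comparing it with `z`, and using `‖c*ᵢ‖² ≤ 2^(j-i) ‖c*ⱼ‖²`, the `j`-th coordinate of `z`
is within `2^n` of `x*ⱼ`. As `|μᵢⱼ|, |x*ⱼ| ≤ 1/2` this gives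
`|zⱼ| ≤ 2^n + 1/2 + (1/2) ∑_{k > j} |zₖ|`, and downward induction yields the bound.
-/

open Finset InnerProductSpace

theorem gso_eq_gramSchmidt {m n : ℕ} (c : Fin n → EuclideanSpace ℝ (Fin m)) :
    gso c = gramSchmidt ℝ c :=
  rfl

section OrthogonalFamily

variable {E ι : Type*} [NormedAddCommGroup E] [InnerProductSpace ℝ E]

theorem real_inner_div_inner_self_mul (v w : E) : ⟪v, w⟫ / ⟪w, w⟫ * ⟪w, w⟫ = ⟪v, w⟫ := by
  rcases eq_or_ne w 0 with rfl | hw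
  · simp
  · exact div_mul_cancel₀ _ (inner_self_ne_zero.mpr hw)

variable [Fintype ι] {g : ι → E}

theorem norm_sum_smul_sq_of_pairwise_inner_eq_zero
    (hg : Pairwise fun i j => ⟪g i, g j⟫ = 0) (a : ι → ℝ) :
    ‖∑ j, a j • g j‖ ^ 2 = ∑ j, a j ^ 2 * ⟪g j, g j⟫ := by
  classical
  rw [← real_inner_self_eq_norm_sq, sum_inner]
  refine sum_congr rfl fun j _ => ?_
  rw [real_inner_smul_left, inner_sum, sum_eq_single j
    (fun k _ hkj => by rw [real_inner_smul_right, hg hkj.symm, mul_zero]) (by simp),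
    real_inner_smul_right]
  ring

theorem norm_sum_smul_sub_sq_of_pairwise_inner_eq_zero
    (hg : Pairwise fun i j => ⟪g i, g j⟫ = 0) (a : ι → ℝ) (t : E) :
    ‖∑ j, a j • g j - t‖ ^ 2 =
      ∑ j, (a j - ⟪t, g j⟫ / ⟪g j, g j⟫) ^ 2 * ⟪g j, g j⟫
        + (‖t‖ ^ 2 - ∑ j, (⟪t, g j⟫ / ⟪g j, g j⟫) ^ 2 * ⟪g j, g j⟫) := by
  have hinner : ⟪∑ j, a j • g j, t⟫ = ∑ j, a j * (⟪t, g j⟫ / ⟪g j, g j⟫ * ⟪g j, g j⟫) := by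
    rw [sum_inner]
    exact sum_congr rfl fun j _ => by
      rw [real_inner_div_inner_self_mul, real_inner_smul_left, real_inner_comm]
  rw [norm_sub_sq_real, norm_sum_smul_sq_of_pairwise_inner_eq_zero hg, hinner, mul_sum]
  simp only [sub_sq, add_mul, sub_mul, sum_add_distrib, sum_sub_distrib, mul_assoc]
  ring

end OrthogonalFamily

section UnitTriangular

variable {n : ℕ}

def gsCoord (μ : Fin n → Fin n → ℝ) (b : Fin n → ℝ) (j : Fin n) : ℝ :=
  b j + ∑ i ∈ Ioi j, b i * μ i j

theorem gsCoord_congr {μ : Fin n → Fin n → ℝ} {b b' : Fin n → ℝ} {j : Fin n}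
    (h : ∀ i, j ≤ i → b i = b' i) : gsCoord μ b j = gsCoord μ b' j := by
  rw [gsCoord, gsCoord, h j le_rfl, sum_congr rfl fun i hi => by rw [h i (mem_Ioi.mp hi).le]]

theorem exists_abs_gsCoord_sub_le (μ : Fin n → Fin n → ℝ) (x : Fin n → ℝ) (z : Fin n → ℤ)
    (j₀ : Fin n) : ∃ y : Fin n → ℤ, (∀ k, j₀ < k → y k = z k) ∧
      ∀ j ≤ j₀, |gsCoord μ (y ·) j - x j| ≤ 1 / 2 := by
  suffices h : ∀ (l : ℕ) (z : Fin n → ℤ), ∃ y : Fin n → ℤ, (∀ k : Fin n, l ≤ k → y k = z k) ∧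
      ∀ j : Fin n, j < l → |gsCoord μ (y ·) j - x j| ≤ 1 / 2 by
    obtain ⟨y, hyz, hy⟩ := h (j₀ + 1) z
    exact ⟨y, fun k hk => hyz k hk, fun j hj => hy j (by omega)⟩
  intro l
  induction l with
  | zero => exact fun z => ⟨z, fun _ _ => rfl, fun j hj => absurd hj (Nat.not_lt_zero _)⟩
  | succ l ih =>
    intro z
    by_cases hl : l < n
    · -- round coordinate `l` first: `gsCoord · l` does not see the coordinates below `l`
      set k : Fin n := ⟨l, hl⟩
      set s := x k - ∑ i ∈ Ioi k, (z i : ℝ) * μ i k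
      obtain ⟨y, hyz, hy⟩ := ih (Function.update z k (round s))
      have hyz' : ∀ i : Fin n, l < i → y i = z i := fun i hi => by
        rw [hyz i hi.le, Function.update_of_ne (Fin.ne_of_gt hi)]
      refine ⟨y, fun i hi => hyz' i hi, fun j hj => ?_⟩
      rcases Nat.lt_succ_iff_lt_or_eq.mp hj with hj | hj
      · exact hy j hj
      · obtain rfl : j = k := Fin.ext hj
        have hsum : ∑ i ∈ Ioi k, (y i : ℝ) * μ i k = ∑ i ∈ Ioi k, (z i : ℝ) * μ i k :=
          sum_congr rfl fun i hi => by rw [hyz' i (Fin.lt_def.mp (mem_Ioi.mp hi))]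
        have hyk : y k = round s := by rw [hyz k le_rfl, Function.update_self]
        rw [gsCoord, hsum, hyk, abs_sub_comm, sub_add_eq_sub_sub_swap]
        exact abs_sub_round s
    · obtain ⟨y, hyz, hy⟩ := ih z
      exact ⟨y, fun k hk => hyz k (by omega), fun j hj => hy j (by omega)⟩

theorem abs_le_of_abs_gsCoord_sub_le {μ : Fin n → Fin n → ℝ} {b x : Fin n → ℝ} {K : ℝ}
    {j : Fin n} (hμ : ∀ k, j < k → |μ k j| ≤ 1 / 2) (hx : |x j| ≤ 1 / 2)
    (hK : |gsCoord μ b j - x j| ≤ K) :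
    |b j| ≤ K + 1 / 2 + 1 / 2 * ∑ k ∈ Ioi j, |b k| := by
  have htail : |∑ k ∈ Ioi j, b k * μ k j| ≤ 1 / 2 * ∑ k ∈ Ioi j, |b k| := by
    rw [mul_sum]
    refine (abs_sum_le_sum_abs _ _).trans (sum_le_sum fun k hk => ?_)
    rw [abs_mul, mul_comm]
    exact mul_le_mul_of_nonneg_right (hμ k (mem_Ioi.mp hk)) (abs_nonneg _)
  have hb : b j = (gsCoord μ b j - x j) + x j - ∑ k ∈ Ioi j, b k * μ k j := by
    rw [gsCoord]; ring
  rw [hb]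
  calc _ ≤ |gsCoord μ b j - x j| + |x j| + |∑ k ∈ Ioi j, b k * μ k j| :=
        (abs_sub _ _).trans (add_le_add_left (abs_add_le _ _) _)
    _ ≤ _ := by linarith

end UnitTriangular

section GramSchmidt

variable {E : Type*} [NormedAddCommGroup E] [InnerProductSpace ℝ E] {n : ℕ}

theorem sum_sum_Iio_eq_sum_sum_Ioi {M : Type*} [AddCommMonoid M] (F : Fin n → Fin n → M) :
    ∑ i, ∑ j ∈ Iio i, F i j = ∑ j, ∑ i ∈ Ioi j, F i j :=
  sum_comm' (by simp)

noncomputable def gramSchmidtCoeff (c : Fin n → E) (v : E) (j : Fin n) : ℝ :=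
  ⟪v, gramSchmidt ℝ c j⟫ / ⟪gramSchmidt ℝ c j, gramSchmidt ℝ c j⟫

theorem sum_smul_eq_sum_gsCoord_smul_gramSchmidt (c : Fin n → E) (b : Fin n → ℝ) :
    ∑ i, b i • c i =
      ∑ j, gsCoord (fun i => gramSchmidtCoeff c (c i)) b j • gramSchmidt ℝ c j := by
  set g := gramSchmidt ℝ c
  have hc : ∀ i, c i = g i + ∑ j ∈ Iio i, gramSchmidtCoeff c (c i) j • g j := fun i => by
    conv_lhs => rw [gramSchmidt_def'' ℝ c i]
    simp only [gramSchmidtCoeff, real_inner_self_eq_norm_sq, real_inner_comm (c i),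
      RCLike.ofReal_real_eq_id, id]
    rfl
  simp only [gsCoord, add_smul, sum_smul, sum_add_distrib, mul_smul, ← sum_sum_Iio_eq_sum_sum_Ioi]
  rw [← sum_add_distrib]
  exact sum_congr rfl fun i _ => by rw [← smul_sum, ← smul_add, ← hc]

theorem sum_sq_gsCoord_sub_mul_le_of_norm_sub_le (c : Fin n → E) (t : E) {b b' : Fin n → ℝ}
    (h : ‖∑ i, b i • c i - t‖ ≤ ‖∑ i, b' i • c i - t‖) :
    ∑ j, (gsCoord (fun i => gramSchmidtCoeff c (c i)) b j - gramSchmidtCoeff c t j) ^ 2 *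
        ⟪gramSchmidt ℝ c j, gramSchmidt ℝ c j⟫ ≤
      ∑ j, (gsCoord (fun i => gramSchmidtCoeff c (c i)) b' j - gramSchmidtCoeff c t j) ^ 2 *
        ⟪gramSchmidt ℝ c j, gramSchmidt ℝ c j⟫ := by
  have hsq := pow_le_pow_left₀ (norm_nonneg _) h 2
  rw [sum_smul_eq_sum_gsCoord_smul_gramSchmidt c, sum_smul_eq_sum_gsCoord_smul_gramSchmidt c,
    norm_sum_smul_sub_sq_of_pairwise_inner_eq_zero (gramSchmidt_pairwise_orthogonal ℝ c),
    norm_sum_smul_sub_sq_of_pairwise_inner_eq_zero (gramSchmidt_pairwise_orthogonal ℝ c)] at hsq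
  simp only [gramSchmidtCoeff] at hsq ⊢
  linarith

end GramSchmidt

theorem le_pow_mul_of_le_mul_succ {n : ℕ} {r : ℝ} (hr : 0 ≤ r) {f : Fin n → ℝ}
    (hf : ∀ i j : Fin n, (j : ℕ) + 1 = i → f j ≤ r * f i) {a b : Fin n} (hab : a ≤ b) :
    f a ≤ r ^ ((b : ℕ) - a) * f b := by
  obtain ⟨d, hd⟩ := Nat.exists_eq_add_of_le (Fin.le_def.mp hab)
  induction d generalizing b with
  | zero => simp [Fin.ext hd]
  | succ d ih =>
    set b' : Fin n := ⟨a + d, by omega⟩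
    calc f a ≤ r ^ ((b' : ℕ) - a) * f b' := ih (Fin.le_def.mpr (by simp [b'])) rfl
      _ ≤ r ^ ((b' : ℕ) - a) * (r * f b) := by
          gcongr
          exact hf b b' (by simp only [b', hd]; ring)
      _ = r ^ ((b : ℕ) - a) * f b := by
          rw [hd, show a + (d + 1) - (a : ℕ) = (b' - a) + 1 by simp [b']]
          ring

theorem sq_le_of_sum_sq_mul_le {n : ℕ} {G d e : Fin n → ℝ} {K : ℝ} {j₀ : Fin n}
    (hG : ∀ j, 0 ≤ G j) (hG₀ : 0 < G j₀) (hK : ∀ j ≤ j₀, G j ≤ K * G j₀)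
    (hde : ∀ j, j₀ < j → d j = e j) (he : ∀ j ≤ j₀, |e j| ≤ 1 / 2)
    (hsum : ∑ j, d j ^ 2 * G j ≤ ∑ j, e j ^ 2 * G j) :
    d j₀ ^ 2 ≤ n * K / 4 := by
  have hsplit (f : Fin n → ℝ) : ∑ j, f j = ∑ j ∈ Iic j₀, f j + ∑ j ∈ Ioi j₀, f j := by
    rw [← sum_filter_add_sum_filter_not univ (· ≤ j₀)]
    congr 2 <;> ext <;> simp
  have htail : ∑ j ∈ Ioi j₀, d j ^ 2 * G j = ∑ j ∈ Ioi j₀, e j ^ 2 * G j :=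
    sum_congr rfl fun j hj => by rw [hde j (mem_Ioi.mp hj)]
  rw [hsplit, hsplit (fun j => e j ^ 2 * G j), htail, add_le_add_iff_right] at hsum
  have hterm : d j₀ ^ 2 * G j₀ ≤ ∑ j ∈ Iic j₀, d j ^ 2 * G j :=
    single_le_sum (f := fun j => d j ^ 2 * G j) (fun j _ => mul_nonneg (sq_nonneg _) (hG j))
      (mem_Iic.mpr le_rfl)
  have hbound : ∑ j ∈ Iic j₀, e j ^ 2 * G j ≤ ∑ j ∈ Iic j₀, 1 / 4 * (K * G j₀) := by
    refine sum_le_sum fun j hj => ?_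
    have hj := mem_Iic.mp hj
    have : e j ^ 2 ≤ 1 / 4 := by nlinarith [abs_le.mp (he j hj), sq_abs (e j)]
    nlinarith [hK j hj, hG j]
  have hcard : ∑ j ∈ Iic j₀, 1 / 4 * (K * G j₀) ≤ n * (1 / 4 * (K * G j₀)) := by
    rw [sum_const, nsmul_eq_mul]
    have : 0 ≤ K * G j₀ := hG₀.le.trans (hK j₀ le_rfl)
    gcongr
    exact_mod_cast (card_le_univ _).trans (Fintype.card_fin n).le
  nlinarith

theorem sum_le_and_le_pow_of_two_mul_le_sum_Ioi {B : ℤ} (hB : 2 ≤ B) :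
    ∀ {N : ℕ} (f : Fin N → ℤ), (∀ j, 2 * f j ≤ 2 * B + 1 + ∑ k ∈ Ioi j, f k) →
      ∑ j, f j ≤ 2 * B ^ N - 2 ∧ ∀ j : Fin N, f j ≤ B ^ (N - j)
  | 0, _, _ => by simp
  | N + 1, f, hf => by
    obtain ⟨hsum, hle⟩ := sum_le_and_le_pow_of_two_mul_le_sum_Ioi hB (fun j => f j.succ) fun j => by
      simpa using hf j.succ
    have hpow : B ^ N * 2 ≤ B ^ (N + 1) := by rw [pow_succ]; gcongr
    have h0 : f 0 ≤ B ^ (N + 1) := by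
      have h := hf 0
      rw [Fin.sum_Ioi_zero] at h
      have hone : 1 ≤ B ^ N := one_le_pow₀ (by omega)
      have : B + B ^ N - 1 ≤ B ^ (N + 1) := by rw [pow_succ]; nlinarith
      omega
    refine ⟨by rw [Fin.sum_univ_succ]; linarith, Fin.cases (by simpa using h0) fun j => ?_⟩
    simpa using hle j

/-- Under the LLL-reducedness conditions (`|μ_{ij}| ≤ 1/2` for `j < i`,
`‖c*_i‖² ≥ ½‖c*_{i−1}‖²`) and the hypothesis that the target `t'` has all Gram–Schmidt
coefficients in `(−1/2, 1/2]`, the coefficients of a closest lattice point to `t'` in the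
Euclidean norm satisfy the per-coordinate bound `|z_{n−i+1}| ≤ 2^{n·i}` for every
`1 ≤ i ≤ n` (with 1-based indexing, so `z ⟨n - i, _⟩` is the `(n−i+1)`-st coordinate). -/
theorem stmt_5 (m n : ℕ)
    (c : Fin n → EuclideanSpace ℝ (Fin m)) (hc : LinearIndependent ℝ c)
    (hμ : ∀ i j : Fin n, j < i →
      abs (⟪c i, gso c j⟫ / ⟪gso c j, gso c j⟫) ≤ 1 / 2)
    (hred : ∀ i j : Fin n, (j : ℕ) + 1 = (i : ℕ) →
      ‖gso c i‖ ^ 2 ≥ (1 / 2) * ‖gso c j‖ ^ 2)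
    (t' : EuclideanSpace ℝ (Fin m))
    (ht' : ∀ i : Fin n,
      ⟪t', gso c i⟫ / ⟪gso c i, gso c i⟫ ∈ Set.Ioc (-(1/2) : ℝ) (1/2))
    (z : Fin n → ℤ)
    (hz : ∀ y : Fin n → ℤ,
      ‖(∑ i, (z i : ℝ) • c i) - t'‖ ≤ ‖(∑ i, (y i : ℝ) • c i) - t'‖) :
    ∀ i : ℕ, ∀ _hi : 1 ≤ i, ∀ _hin : i ≤ n,
      |z ⟨n - i, by omega⟩| ≤ (2 : ℤ) ^ (n * i) := by
  rw [gso_eq_gramSchmidt] at hμ hred ht'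
  intro i hi hin
  set g := gramSchmidt ℝ c
  have hgrowth (j j₀ : Fin n) (hj : j ≤ j₀) : ⟪g j, g j⟫ ≤ 2 ^ n * ⟪g j₀, g j₀⟫ := by
    refine (le_pow_mul_of_le_mul_succ (f := fun j => ⟪g j, g j⟫) two_pos.le
      (fun i j hij => ?_) hj).trans ?_
    · simp only [real_inner_self_eq_norm_sq]; linarith [hred i j hij]
    · gcongr
      exacts [real_inner_self_nonneg, one_le_two, by omega]
  have hcoeff (j₀ : Fin n) : |gsCoord (fun i => gramSchmidtCoeff c (c i)) (z ·) j₀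
      - gramSchmidtCoeff c t' j₀| ≤ 2 ^ n := by
    obtain ⟨y, hyz, hy⟩ := exists_abs_gsCoord_sub_le _ (gramSchmidtCoeff c t') z j₀
    have hsq := sq_le_of_sum_sq_mul_le (fun _ => real_inner_self_nonneg)
      (real_inner_self_pos.mpr (gramSchmidt_ne_zero j₀ hc)) (hgrowth · j₀)
      (fun j hj => by
        rw [gsCoord_congr (b := (z ·)) (b' := (y ·)) fun k hk => by rw [hyz k (hj.trans_le hk)]])
      hy (sum_sq_gsCoord_sub_mul_le_of_norm_sub_le c t' (hz y))
    have hn : (n : ℝ) ≤ 2 ^ n := by exact_mod_cast Nat.lt_two_pow_self.le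
    exact abs_le_of_sq_le_sq (by nlinarith [pow_pos (two_pos : (0 : ℝ) < 2) n]) (by positivity)
  have hrec (j : Fin n) : 2 * |z j| ≤ 2 * 2 ^ n + 1 + ∑ k ∈ Ioi j, |z k| := by
    have := abs_le_of_abs_gsCoord_sub_le (fun k hk => hμ k j hk)
      (abs_le.mpr ⟨(ht' j).1.le, (ht' j).2⟩) (hcoeff j)
    exact_mod_cast (by linarith : 2 * |(z j : ℝ)| ≤ 2 * 2 ^ n + 1 + ∑ k ∈ Ioi j, |(z k : ℝ)|)
  have hB : (2 : ℤ) ≤ 2 ^ n := le_self_pow₀ one_le_two (by omega)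
  have := (sum_le_and_le_pow_of_two_mul_le_sum_Ioi hB (|z ·|) hrec).2 ⟨n - i, by omega⟩
  simpa [Nat.sub_sub_self hin, ← pow_mul] using this
end

section
/- Let m ≥ n ≥ 1, let c_1, …, c_n ∈ ℝ^m be linearly independent with Gram–Schmidt orthogonalization c*_1, …, c*_n, and let t ∈ ℝ^m. Then there exist integers w_1, …, w_n such that the vector t′ = t − Σ_{i=1}^n w_i c_i satisfies: (i) for every i ∈ {1,…,n}, the coefficient ⟨t′, c*_i⟩/⟨c*_i, c*_i⟩ lies in (−1/2, 1/2]; and consequently (ii) the orthogonal projection π(t′) of t′ onto span(c_1,…,c_n) satisfies ‖π(t′)‖₂² ≤ ¼ · Σ_{i=1}^n ‖c*_i‖₂². In particular t − t′ belongs to the lattice L = {Σ_i z_i c_i : z_i ∈ ℤ} and the Euclidean distance of t′ to L is at most (¼ Σ_{i=1}^n ‖c*_i‖₂² + ‖t′ − π(t′)‖₂²)^{1/2}. -/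
/-!
The Gram–Schmidt coefficients `μⱼᵢ = ⟪cⱼ, c*ᵢ⟫ / ⟪c*ᵢ, c*ᵢ⟫` form a unit upper triangular matrix,
so the coefficients of `t - ∑ wⱼ cⱼ` along the `c*ᵢ` are `xᵢ - ∑ⱼ μⱼᵢ wⱼ`, and the integers
`w_n, …, w_1` can be chosen one after the other by rounding. The `c*ᵢ` are an orthogonal family
spanning `span(c)`, so `‖π(t')‖² = ∑ᵢ (coefficient of t' along c*ᵢ)² ‖c*ᵢ‖² ≤ ¼ ∑ ‖c*ᵢ‖²`; the
distance bound is then Pythagoras for the lattice point `0`.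
-/

open scoped RealInnerProductSpace

open InnerProductSpace Submodule Set
open scoped Matrix

-- Rounding half down; `x - round x` would lie in `[-1/2, 1/2)` instead.
theorem sub_ceil_sub_half_mem_Ioc {α : Type*} [Field α] [LinearOrder α] [IsStrictOrderedRing α]
    [FloorRing α] (x : α) : x - ⌈x - 1 / 2⌉ ∈ Ioc (-(1 / 2) : α) (1 / 2) := by
  have hlt := Int.ceil_lt_add_one (x - 1 / 2)
  have hle := Int.le_ceil (x - 1 / 2)
  constructor <;> linarith

/-- Solve the system row by row from the last one upwards: row `i` only involves the unknowns
`w j` with `i ≤ j`, and rounding fixes `w i` once the later ones are known. -/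
theorem Matrix.IsUpperTriangular.exists_int_sub_mulVec_mem_Ioc {α : Type*} [Field α]
    [LinearOrder α] [IsStrictOrderedRing α] [FloorRing α] {n : ℕ} {M : Matrix (Fin n) (Fin n) α}
    (hM : M.IsUpperTriangular) (hdiag : ∀ i, M i i = 1) (x : Fin n → α) :
    ∃ w : Fin n → ℤ, ∀ i, x i - (M *ᵥ fun j => (w j : α)) i ∈ Ioc (-(1 / 2) : α) (1 / 2) := by
  induction n with
  | zero => exact ⟨finZeroElim, fun i => i.elim0⟩
  | succ n ih =>
    obtain ⟨w, hw⟩ := ih (M := M.submatrix Fin.succ Fin.succ)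
      (fun i j hij => hM (Fin.succ_lt_succ_iff.2 hij)) (fun i => hdiag i.succ) (x ∘ Fin.succ)
    set y := x 0 - ∑ j, M 0 j.succ * w j
    refine ⟨Fin.cons ⌈y - 1 / 2⌉ w, Fin.cases ?_ fun i => ?_⟩
    · convert sub_ceil_sub_half_mem_Ioc y using 1
      simp only [Matrix.mulVec, dotProduct, Fin.sum_univ_succ, hdiag, Fin.cons_zero,
        Fin.cons_succ, y]
      ring
    · have hcol : M i.succ 0 = 0 := hM (Fin.succ_pos i)
      simpa [Matrix.mulVec, dotProduct, Fin.sum_univ_succ, hcol] using hw i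

section Orthogonal

variable {E : Type*} [NormedAddCommGroup E] [InnerProductSpace ℝ E] {ι : Type*} [Fintype ι]
  {v : ι → E}

theorem inner_sum_smul_of_pairwise_inner_eq_zero (hv : Pairwise fun i j => ⟪v i, v j⟫ = 0)
    (b : ι → ℝ) (i : ι) : ⟪∑ j, b j • v j, v i⟫ = b i * ‖v i‖ ^ 2 := by
  rw [sum_inner, Finset.sum_eq_single i (fun j _ hji => by rw [real_inner_smul_left, hv hji,
    mul_zero]) (fun hi => absurd (Finset.mem_univ i) hi), real_inner_smul_left,
    real_inner_self_eq_norm_sq]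

theorem norm_sq_sum_smul_of_pairwise_inner_eq_zero (hv : Pairwise fun i j => ⟪v i, v j⟫ = 0)
    (b : ι → ℝ) : ‖∑ j, b j • v j‖ ^ 2 = ∑ j, b j ^ 2 * ‖v j‖ ^ 2 := by
  rw [← real_inner_self_eq_norm_sq, inner_sum]
  refine Finset.sum_congr rfl fun j _ => ?_
  rw [real_inner_smul_right, inner_sum_smul_of_pairwise_inner_eq_zero hv]
  ring

theorem norm_sq_starProjection_of_pairwise_inner_eq_zero {K : Submodule ℝ E}
    [K.HasOrthogonalProjection] (hK : span ℝ (range v) = K)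
    (hv : Pairwise fun i j => ⟪v i, v j⟫ = 0) (x : E) :
    ‖K.starProjection x‖ ^ 2 = ∑ i, (⟪x, v i⟫ / ‖v i‖ ^ 2) ^ 2 * ‖v i‖ ^ 2 := by
  subst hK
  obtain ⟨b, hb⟩ :=
    (mem_span_range_iff_exists_fun ℝ).1 ((span ℝ (range v)).starProjection_apply_mem x)
  have hcoord : ∀ i, ⟪x, v i⟫ = b i * ‖v i‖ ^ 2 := fun i => by
    have hvi : v i ∈ span ℝ (range v) := subset_span (mem_range_self i)
    rw [← starProjection_eq_self_iff.2 hvi, ← inner_starProjection_left_eq_right,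
      starProjection_eq_self_iff.2 hvi, ← hb, inner_sum_smul_of_pairwise_inner_eq_zero hv]
  rw [← hb, norm_sq_sum_smul_of_pairwise_inner_eq_zero hv]
  refine Finset.sum_congr rfl fun i _ => ?_
  rcases eq_or_ne ‖v i‖ 0 with h | h
  · simp [h]
  · rw [hcoord, mul_div_cancel_right₀ _ (pow_ne_zero 2 h)]

end Orthogonal

section GramSchmidt

variable {E : Type*} [NormedAddCommGroup E] [InnerProductSpace ℝ E]
  {ι : Type*} [LinearOrder ι] [LocallyFiniteOrderBot ι] [WellFoundedLT ι]

theorem InnerProductSpace.inner_gramSchmidt_apply_self (f : ι → E) (i : ι) :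
    ⟪f i, gramSchmidt ℝ f i⟫ = ⟪gramSchmidt ℝ f i, gramSchmidt ℝ f i⟫ := by
  conv_lhs => rw [gramSchmidt_def'' ℝ f i]
  rw [inner_add_left, sum_inner, add_eq_left]
  refine Finset.sum_eq_zero fun j hj => ?_
  rw [real_inner_smul_left, gramSchmidt_orthogonal ℝ f (Finset.mem_Iio.1 hj).ne, mul_zero]

/-- In the paper's notation, `gramSchmidtCoord c t i = xᵢ` and `gramSchmidtCoord c (c j) i = μⱼᵢ`. -/
noncomputable def gramSchmidtCoord (f : ι → E) (x : E) (i : ι) : ℝ :=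
  ⟪x, gramSchmidt ℝ f i⟫ / ⟪gramSchmidt ℝ f i, gramSchmidt ℝ f i⟫

theorem gramSchmidtCoord_sub_sum_smul [Fintype ι] (f : ι → E) (x : E) (a : ι → ℝ) (i : ι) :
    gramSchmidtCoord f (x - ∑ j, a j • f j) i =
      gramSchmidtCoord f x i - ((Matrix.of fun i j => gramSchmidtCoord f (f j) i) *ᵥ a) i := by
  simp only [gramSchmidtCoord, inner_sub_left, sum_inner, real_inner_smul_left, sub_div,
    Finset.sum_div, Matrix.mulVec, dotProduct, Matrix.of_apply, mul_div_assoc, mul_comm]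

theorem isUpperTriangular_gramSchmidtCoord (f : ι → E) :
    (Matrix.of fun i j => gramSchmidtCoord f (f j) i).IsUpperTriangular := by
  intro i j (hji : j < i)
  rw [Matrix.of_apply, gramSchmidtCoord, real_inner_comm, gramSchmidt_inv_triangular ℝ f hji,
    zero_div]

theorem gramSchmidtCoord_apply_self {f : ι → E} (hf : LinearIndependent ℝ f) (i : ι) :
    gramSchmidtCoord f (f i) i = 1 := by
  rw [gramSchmidtCoord, inner_gramSchmidt_apply_self]
  exact div_self (inner_self_ne_zero.2 (gramSchmidt_ne_zero i hf))

theorem exists_int_gramSchmidtCoord_sub_sum_smul_mem_Ioc {n : ℕ} {f : Fin n → E}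
    (hf : LinearIndependent ℝ f) (x : E) :
    ∃ w : Fin n → ℤ, ∀ i,
      gramSchmidtCoord f (x - ∑ j, (w j : ℝ) • f j) i ∈ Ioc (-(1 / 2) : ℝ) (1 / 2) := by
  obtain ⟨w, hw⟩ := (isUpperTriangular_gramSchmidtCoord f).exists_int_sub_mulVec_mem_Ioc
    (gramSchmidtCoord_apply_self hf) (gramSchmidtCoord f x)
  exact ⟨w, fun i => by rw [gramSchmidtCoord_sub_sum_smul]; exact hw i⟩

theorem norm_sq_starProjection_span_le_of_gramSchmidtCoord_mem_Icc [Fintype ι] {f : ι → E}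
    [(span ℝ (range f)).HasOrthogonalProjection] {x : E}
    (hx : ∀ i, gramSchmidtCoord f x i ∈ Icc (-(1 / 2) : ℝ) (1 / 2)) :
    ‖(span ℝ (range f)).starProjection x‖ ^ 2 ≤ 1 / 4 * ∑ i, ‖gramSchmidt ℝ f i‖ ^ 2 := by
  rw [norm_sq_starProjection_of_pairwise_inner_eq_zero (span_gramSchmidt ℝ f)
    (gramSchmidt_pairwise_orthogonal ℝ f), Finset.mul_sum]
  refine Finset.sum_le_sum fun i _ => ?_
  have hsq : gramSchmidtCoord f x i ^ 2 ≤ 1 / 4 := by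
    obtain ⟨h₁, h₂⟩ := hx i
    nlinarith
  rw [gramSchmidtCoord, real_inner_self_eq_norm_sq] at hsq
  nlinarith [sq_nonneg ‖gramSchmidt ℝ f i‖]

end GramSchmidt

theorem stmt_6_general (m n : ℕ)
    (c : Fin n → EuclideanSpace ℝ (Fin m)) (hc : LinearIndependent ℝ c)
    (t : EuclideanSpace ℝ (Fin m)) :
    ∃ w : Fin n → ℤ, ∃ t' : EuclideanSpace ℝ (Fin m),
      t' = t - ∑ i, (w i : ℝ) • c i ∧
      (∀ i : Fin n,
        ⟪t', gso c i⟫ / ⟪gso c i, gso c i⟫ ∈ Set.Ioc (-(1/2) : ℝ) (1/2)) ∧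
      ‖(Submodule.orthogonalProjectionOnto (Submodule.span ℝ (Set.range c)) t' :
          EuclideanSpace ℝ (Fin m))‖ ^ 2 ≤ (1/4) * ∑ i, ‖gso c i‖ ^ 2 ∧
      (∃ zz : Fin n → ℤ, t - t' = ∑ i, (zz i : ℝ) • c i) ∧
      (∃ y : Fin n → ℤ,
        ‖t' - ∑ i, (y i : ℝ) • c i‖ ≤
          Real.sqrt ((1/4) * ∑ i, ‖gso c i‖ ^ 2 +
            ‖t' - (Submodule.orthogonalProjectionOnto (Submodule.span ℝ (Set.range c)) t' :
              EuclideanSpace ℝ (Fin m))‖ ^ 2)) := by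
  obtain ⟨w, hw⟩ := exists_int_gramSchmidtCoord_sub_sum_smul_mem_Ioc hc t
  set t' := t - ∑ i, (w i : ℝ) • c i
  set K := span ℝ (range c)
  have hproj : ‖K.starProjection t'‖ ^ 2 ≤ 1 / 4 * ∑ i, ‖gso c i‖ ^ 2 :=
    norm_sq_starProjection_span_le_of_gramSchmidtCoord_mem_Icc fun i => Ioc_subset_Icc_self (hw i)
  have hpythagoras : ‖t'‖ ^ 2 = ‖K.starProjection t'‖ ^ 2 + ‖t' - K.starProjection t'‖ ^ 2 := by
    rw [K.norm_sq_eq_add_norm_sq_starProjection t', starProjection_orthogonal_val]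
  refine ⟨w, t', rfl, hw, hproj, ⟨w, sub_sub_cancel t _⟩, 0, ?_⟩
  simp only [Pi.zero_apply, Int.cast_zero, zero_smul, Finset.sum_const_zero, sub_zero,
    coe_orthogonalProjectionOnto_apply]
  rw [← Real.sqrt_sq (norm_nonneg t'), hpythagoras]
  gcongr

/-- Babai-style rounding: Given linearly independent `c_1, …, c_n ∈ ℝ^m` with
Gram–Schmidt orthogonalization `c*_1, …, c*_n` and any `t ∈ ℝ^m`, there exist integers
`w_1, …, w_n` such that `t' = t − ∑ w_i c_i` satisfies: (i) every Gram–Schmidt coefficient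
`⟪t', c*_i⟫/⟪c*_i, c*_i⟫` lies in `(−1/2, 1/2]`; (ii) the orthogonal projection `π(t')` of `t'`
onto `span(c_1,…,c_n)` satisfies `‖π(t')‖² ≤ ¼ ∑ ‖c*_i‖²`; in particular `t − t'` lies in the
lattice generated by the `c_i`, and the Euclidean distance of `t'` to this lattice is at most
`(¼ ∑ ‖c*_i‖² + ‖t' − π(t')‖²)^{1/2}`. -/
theorem stmt_6 (m n : ℕ) (hn : 1 ≤ n) (hmn : n ≤ m)
    (c : Fin n → EuclideanSpace ℝ (Fin m)) (hc : LinearIndependent ℝ c)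
    (t : EuclideanSpace ℝ (Fin m)) :
    ∃ w : Fin n → ℤ, ∃ t' : EuclideanSpace ℝ (Fin m),
      t' = t - ∑ i, (w i : ℝ) • c i ∧
      (∀ i : Fin n,
        ⟪t', gso c i⟫ / ⟪gso c i, gso c i⟫ ∈ Set.Ioc (-(1/2) : ℝ) (1/2)) ∧
      ‖(Submodule.orthogonalProjectionOnto (Submodule.span ℝ (Set.range c)) t' :
          EuclideanSpace ℝ (Fin m))‖ ^ 2 ≤ (1/4) * ∑ i, ‖gso c i‖ ^ 2 ∧
      (∃ zz : Fin n → ℤ, t - t' = ∑ i, (zz i : ℝ) • c i) ∧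
      (∃ y : Fin n → ℤ,
        ‖t' - ∑ i, (y i : ℝ) • c i‖ ≤
          Real.sqrt ((1/4) * ∑ i, ‖gso c i‖ ^ 2 +
            ‖t' - (Submodule.orthogonalProjectionOnto (Submodule.span ℝ (Set.range c)) t' :
              EuclideanSpace ℝ (Fin m))‖ ^ 2)) :=
  stmt_6_general m n c hc t
end

section
/- Let m ≥ n ≥ 1, let p ∈ [1,∞) be a real number, and let τ > 0. Let c_1, …, c_n ∈ ℝ^m be linearly independent vectors whose Gram–Schmidt orthogonalization satisfies the LLL reducedness conditions: |μ_{ij}| ≤ 1/2 for all 1 ≤ j < i ≤ n, and ‖c*_i‖₂² ≥ ½‖c*_{i−1}‖₂² for all 1 < i ≤ n. Let t′ ∈ ℝ^m be such that for every i the coefficient x*_i = ⟨t′, c*_i⟩/⟨c*_i, c*_i⟩ lies in (−1/2, 1/2]. Let v ∈ ℝ^m be a lattice vector (v = Σ_i z_i c_i with z ∈ ℤ^n) satisfying ‖v − t′‖_p ≤ τ · ‖c_1‖_p, and write v = Σ_{i=1}^n y_i c*_i with y_i ∈ ℝ. Then for every i ∈ {1,…,n}, |y_i| ≤ τ · m ·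 2^{(i−1)/2} + 1/2. -/
open scoped RealInnerProductSpace

/-- The `ℓ_p` norm `(∑ i, |x i|^p)^{1/p}` of a vector `x ∈ ℝ^m`, for a real `p`. -/
noncomputable def lpNorm' {m : ℕ} (p : ℝ) (x : EuclideanSpace ℝ (Fin m)) : ℝ :=
  (∑ i, |x i| ^ p) ^ (1 / p)

/-!
The `c*_j` are orthogonal, so `y_i = ⟪v, c*_i⟫ / ‖c*_i‖²` and hence
`|y_i - x*_i| = |⟪v - t', c*_i⟫| / ‖c*_i‖² ≤ ‖v - t'‖₂ / ‖c*_i‖`. The two norm comparisons turn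
the `ℓ_p` bound into `‖v - t'‖₂ ≤ τ m ‖c_1‖₂ = τ m ‖c*_1‖₂`, and the second LLL condition,
iterated, gives `‖c*_1‖ ≤ 2^{(i-1)/2} ‖c*_i‖`. It remains to add `|x*_i| ≤ 1/2`.
-/

theorem sum_rpow_le_rpow_sum {ι : Type*} (s : Finset ι) {f : ι → ℝ} (hf : ∀ i ∈ s, 0 ≤ f i)
    {p : ℝ} (hp : 1 ≤ p) : ∑ i ∈ s, f i ^ p ≤ (∑ i ∈ s, f i) ^ p := by
  set S := ∑ i ∈ s, f i
  have hS : 0 ≤ S := Finset.sum_nonneg hf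
  have hsplit : ∀ x : ℝ, 0 ≤ x → x ^ p = x ^ (p - 1) * x := fun x hx => by
    rw [← Real.rpow_add_one' hx (by linarith), sub_add_cancel]
  calc ∑ i ∈ s, f i ^ p = ∑ i ∈ s, f i ^ (p - 1) * f i :=
        Finset.sum_congr rfl fun i hi => hsplit _ (hf i hi)
    _ ≤ ∑ i ∈ s, S ^ (p - 1) * f i := by
        refine Finset.sum_le_sum fun i hi => mul_le_mul_of_nonneg_right ?_ (hf i hi)
        exact Real.rpow_le_rpow (hf i hi) (Finset.single_le_sum hf hi) (by linarith)
    _ = S ^ p := by rw [← Finset.mul_sum, hsplit S hS]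

section LpNorm

variable {m : ℕ}

theorem abs_apply_le_lpNorm' {p : ℝ} (hp : 0 < p) (x : EuclideanSpace ℝ (Fin m)) (i : Fin m) :
    |x i| ≤ lpNorm' p x := by
  have hsingle : |x i| ^ p ≤ ∑ j, |x j| ^ p :=
    Finset.single_le_sum (f := fun j => |x j| ^ p) (fun j _ => by positivity) (Finset.mem_univ i)
  calc |x i| = (|x i| ^ p) ^ (1 / p) := by
        rw [← Real.rpow_mul (abs_nonneg _), mul_one_div_cancel hp.ne', Real.rpow_one]
    _ ≤ lpNorm' p x := by unfold lpNorm'; gcongr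

theorem lpNorm'_le_sum_abs {p : ℝ} (hp : 1 ≤ p) (x : EuclideanSpace ℝ (Fin m)) :
    lpNorm' p x ≤ ∑ i, |x i| := by
  have hp0 : 0 < p := by linarith
  calc lpNorm' p x ≤ ((∑ i, |x i|) ^ p) ^ (1 / p) := by
        unfold lpNorm'
        gcongr
        exact sum_rpow_le_rpow_sum _ (fun i _ => abs_nonneg _) hp
    _ = ∑ i, |x i| := by
        rw [← Real.rpow_mul (Finset.sum_nonneg fun i _ => abs_nonneg _),
          mul_one_div_cancel hp0.ne', Real.rpow_one]

theorem sum_abs_le_sqrt_mul_norm (x : EuclideanSpace ℝ (Fin m)) :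
    ∑ i, |x i| ≤ √m * ‖x‖ := by
  rw [EuclideanSpace.norm_eq, ← Real.sqrt_mul (Nat.cast_nonneg m)]
  refine Real.le_sqrt_of_sq_le ?_
  simpa using sq_sum_le_card_mul_sum_sq (s := Finset.univ) (f := fun i => |x i|)

theorem norm_le_sqrt_mul_lpNorm' {p : ℝ} (hp : 0 < p) (x : EuclideanSpace ℝ (Fin m)) :
    ‖x‖ ≤ √m * lpNorm' p x := by
  rw [EuclideanSpace.norm_eq, ← Real.sqrt_sq (by unfold lpNorm'; positivity : 0 ≤ lpNorm' p x),
    ← Real.sqrt_mul (Nat.cast_nonneg m)]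
  gcongr
  calc ∑ i, ‖x i‖ ^ 2 ≤ ∑ _i : Fin m, lpNorm' p x ^ 2 := by
        gcongr with i
        rw [Real.norm_eq_abs]
        exact abs_apply_le_lpNorm' hp x i
    _ = m * lpNorm' p x ^ 2 := by simp

theorem lpNorm'_le_sqrt_mul_norm {p : ℝ} (hp : 1 ≤ p) (x : EuclideanSpace ℝ (Fin m)) :
    lpNorm' p x ≤ √m * ‖x‖ :=
  (lpNorm'_le_sum_abs hp x).trans (sum_abs_le_sqrt_mul_norm x)

theorem norm_le_of_lpNorm'_le {p τ : ℝ} (hp : 1 ≤ p) (hτ : 0 ≤ τ) {x w : EuclideanSpace ℝ (Fin m)}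
    (h : lpNorm' p x ≤ τ * lpNorm' p w) : ‖x‖ ≤ τ * m * ‖w‖ :=
  calc ‖x‖ ≤ √m * lpNorm' p x := norm_le_sqrt_mul_lpNorm' (by linarith) x
    _ ≤ √m * (τ * (√m * ‖w‖)) := by
        gcongr
        exact h.trans (by gcongr; exact lpNorm'_le_sqrt_mul_norm hp w)
    _ = (√m * √m) * τ * ‖w‖ := by ring
    _ = τ * m * ‖w‖ := by rw [Real.mul_self_sqrt (Nat.cast_nonneg m)]; ring

end LpNorm

section InnerProduct

variable {E : Type*} [NormedAddCommGroup E] [InnerProductSpace ℝ E]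

theorem abs_inner_div_inner_self_le (x b : E) : |⟪x, b⟫ / ⟪b, b⟫| ≤ ‖x‖ / ‖b‖ := by
  rcases eq_or_ne b 0 with rfl | hb
  · simp
  have hb' : 0 < ‖b‖ := norm_pos_iff.2 hb
  rw [real_inner_self_eq_norm_sq, abs_div, abs_of_nonneg (sq_nonneg ‖b‖),
    div_le_div_iff₀ (by positivity) hb']
  calc |⟪x, b⟫| * ‖b‖ ≤ ‖x‖ * ‖b‖ * ‖b‖ := by gcongr; exact abs_real_inner_le_norm x b
    _ = ‖x‖ * ‖b‖ ^ 2 := by ring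

theorem inner_sum_smul_div_inner_self {ι : Type*} [Fintype ι] {b : ι → E}
    (hb : Pairwise fun i j => ⟪b i, b j⟫ = 0) (y : ι → ℝ) {i : ι} (hbi : b i ≠ 0) :
    ⟪∑ j, y j • b j, b i⟫ / ⟪b i, b i⟫ = y i := by
  rw [sum_inner, Finset.sum_eq_single i
    (fun j _ hji => by rw [real_inner_smul_left, hb hji, mul_zero])
    (fun h => absurd (Finset.mem_univ i) h), real_inner_smul_left,
    mul_div_cancel_right₀ _ (inner_self_ne_zero.2 hbi)]

end InnerProduct

theorem le_pow_mul_of_le_mul_succ_s8 {n : ℕ} {a : Fin n → ℝ} {q : ℝ} (hq : 0 ≤ q)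
    (h : ∀ i j : Fin n, (j : ℕ) + 1 = i → a j ≤ q * a i) (k : Fin n) :
    a ⟨0, k.pos⟩ ≤ q ^ (k : ℕ) * a k := by
  obtain ⟨k, hk⟩ := k
  induction k with
  | zero => simp
  | succ k ih =>
    calc a ⟨0, by omega⟩ ≤ q ^ k * a ⟨k, by omega⟩ := ih (by omega)
      _ ≤ q ^ k * (q * a ⟨k + 1, hk⟩) := by gcongr; exact h _ _ rfl
      _ = q ^ (k + 1) * a ⟨k + 1, hk⟩ := by ring

theorem norm_zero_le_two_rpow_mul_norm {E : Type*} [SeminormedAddGroup E] {n : ℕ} {b : Fin n → E}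
    (h : ∀ i j : Fin n, (j : ℕ) + 1 = i → ‖b i‖ ^ 2 ≥ (1 / 2) * ‖b j‖ ^ 2) (k : Fin n) :
    ‖b ⟨0, k.pos⟩‖ ≤ 2 ^ ((k : ℝ) / 2) * ‖b k‖ := by
  have hstep : ∀ i j : Fin n, (j : ℕ) + 1 = i → ‖b j‖ ≤ √2 * ‖b i‖ := fun i j hij => by
    refine (pow_le_pow_iff_left₀ (norm_nonneg _) (by positivity) two_ne_zero).1 ?_
    rw [mul_pow, Real.sq_sqrt zero_le_two]
    linarith [h i j hij]
  have hpow : √2 ^ (k : ℕ) = 2 ^ ((k : ℝ) / 2) := by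
    rw [Real.sqrt_eq_rpow, ← Real.rpow_natCast, ← Real.rpow_mul zero_le_two]
    ring_nf
  rw [← hpow]
  exact le_pow_mul_of_le_mul_succ_s8 (Real.sqrt_nonneg 2) hstep k

theorem gso_pairwise_orthogonal {m n : ℕ} (c : Fin n → EuclideanSpace ℝ (Fin m)) :
    Pairwise fun i j => ⟪gso c i, gso c j⟫ = 0 :=
  InnerProductSpace.gramSchmidt_pairwise_orthogonal ℝ c

theorem gso_ne_zero {m n : ℕ} {c : Fin n → EuclideanSpace ℝ (Fin m)}
    (hc : LinearIndependent ℝ c) (i : Fin n) : gso c i ≠ 0 :=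
  InnerProductSpace.gramSchmidt_ne_zero i hc

theorem gso_zero {m n : ℕ} (c : Fin n → EuclideanSpace ℝ (Fin m)) (h : 0 < n) :
    gso c ⟨0, h⟩ = c ⟨0, h⟩ := by
  have : Finset.Iio (⟨0, h⟩ : Fin n) = ∅ := by ext x; simp [Fin.lt_def]
  rw [gso, InnerProductSpace.gramSchmidt_def, this, Finset.sum_empty, sub_zero]

theorem stmt_8_general (m n : ℕ) (hn : 1 ≤ n)
    (p : ℝ) (hp : 1 ≤ p) (τ : ℝ) (hτ : 0 < τ)
    (c : Fin n → EuclideanSpace ℝ (Fin m)) (hc : LinearIndependent ℝ c)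
    (hred : ∀ i j : Fin n, (j : ℕ) + 1 = (i : ℕ) →
      ‖gso c i‖ ^ 2 ≥ (1 / 2) * ‖gso c j‖ ^ 2)
    (t' : EuclideanSpace ℝ (Fin m))
    (ht' : ∀ i : Fin n,
      ⟪t', gso c i⟫ / ⟪gso c i, gso c i⟫ ∈ Set.Ioc (-(1/2) : ℝ) (1/2))
    (v : EuclideanSpace ℝ (Fin m)) (y : Fin n → ℝ)
    (hvy : v = ∑ i, y i • gso c i)
    (hdist : lpNorm' p (v - t') ≤ τ * lpNorm' p (c ⟨0, hn⟩)) :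
    ∀ i : Fin n, |y i| ≤ τ * m * 2 ^ ((i : ℝ) / 2) + 1 / 2 := by
  intro i
  set x := ⟪t', gso c i⟫ / ⟪gso c i, gso c i⟫
  have hx : |x| ≤ 1 / 2 := abs_le.2 ⟨(ht' i).1.le, (ht' i).2⟩
  have hy : y i = ⟪v, gso c i⟫ / ⟪gso c i, gso c i⟫ := by
    rw [hvy, inner_sum_smul_div_inner_self (gso_pairwise_orthogonal c) y (gso_ne_zero hc i)]
  have hyx : |y i - x| ≤ ‖v - t'‖ / ‖gso c i‖ := by
    rw [hy, ← sub_div, ← inner_sub_left]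
    exact abs_inner_div_inner_self_le _ _
  have hvt : ‖v - t'‖ ≤ τ * m * ‖gso c ⟨0, hn⟩‖ := by
    rw [gso_zero c hn]
    exact norm_le_of_lpNorm'_le hp hτ.le hdist
  have hgrowth : ‖gso c ⟨0, hn⟩‖ ≤ 2 ^ ((i : ℝ) / 2) * ‖gso c i‖ :=
    norm_zero_le_two_rpow_mul_norm hred i
  have hratio : ‖v - t'‖ / ‖gso c i‖ ≤ τ * m * 2 ^ ((i : ℝ) / 2) := by
    rw [div_le_iff₀ (norm_pos_iff.2 (gso_ne_zero hc i)), mul_assoc _ (2 ^ _ : ℝ)]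
    exact hvt.trans (by gcongr)
  linarith [abs_sub_abs_le_abs_sub (y i) x]

/-- Let `p ∈ [1,∞)`, `τ > 0`, and let `c_1, …, c_n ∈ ℝ^m` be linearly independent
with LLL-reduced Gram–Schmidt data, and let `t'` have all Gram–Schmidt coefficients in
`(−1/2, 1/2]`. If a lattice vector `v = ∑ z_i c_i` satisfies `‖v − t'‖_p ≤ τ·‖c_1‖_p` and
`v = ∑ y_i c*_i` in Gram–Schmidt coordinates, then `|y_i| ≤ τ·m·2^{(i−1)/2} + 1/2`
for every `i` (1-based; here the index `i : Fin n` is 0-based, so the exponent is `i/2`). -/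
theorem stmt_8 (m n : ℕ) (hn : 1 ≤ n) (hmn : n ≤ m)
    (p : ℝ) (hp : 1 ≤ p) (τ : ℝ) (hτ : 0 < τ)
    (c : Fin n → EuclideanSpace ℝ (Fin m)) (hc : LinearIndependent ℝ c)
    (hμ : ∀ i j : Fin n, j < i →
      abs (⟪c i, gso c j⟫ / ⟪gso c j, gso c j⟫) ≤ 1 / 2)
    (hred : ∀ i j : Fin n, (j : ℕ) + 1 = (i : ℕ) →
      ‖gso c i‖ ^ 2 ≥ (1 / 2) * ‖gso c j‖ ^ 2)
    (t' : EuclideanSpace ℝ (Fin m))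
    (ht' : ∀ i : Fin n,
      ⟪t', gso c i⟫ / ⟪gso c i, gso c i⟫ ∈ Set.Ioc (-(1/2) : ℝ) (1/2))
    (v : EuclideanSpace ℝ (Fin m)) (z : Fin n → ℤ) (y : Fin n → ℝ)
    (hvz : v = ∑ i, (z i : ℝ) • c i)
    (hvy : v = ∑ i, y i • gso c i)
    (hdist : lpNorm' p (v - t') ≤ τ * lpNorm' p (c ⟨0, hn⟩)) :
    ∀ i : Fin n, |y i| ≤ τ * m * 2 ^ ((i : ℝ) / 2) + 1 / 2 :=
  stmt_8_general m n hn p hp τ hτ c hc hred t' ht' v y hvy hdist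
end

section
/- Let m, n, s, r be positive integers, let p ∈ [1,∞) be a real number, let C be an m×n integer matrix and t ∈ ℤ^m. Define the truncated matrix C′ by C′_{ij} = ⌊C_{ij}/s⌋ and the truncated target t′ by t′_i = ⌊t_i/s⌋ (entrywise floor of division by s). Then for every z ∈ ℤ^n with max_j |z_j| ≤ r, one has | s·‖C′z − t′‖_p − ‖Cz − t‖_p | ≤ m^{1/p} · s · (n·r + 1). -/
lemma aux_fdiv (s : ℤ) (hs : 0 < s) (a : ℤ) : |s * a.fdiv s - a| ≤ s := by
  rw [Int.fdiv_eq_ediv_of_nonneg a hs.le]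
  have h1 := Int.emod_nonneg a hs.ne'
  have h2 := Int.emod_lt_of_pos a hs
  have h3 := Int.mul_ediv_add_emod a s
  have h4 : s * (a / s) - a = -(a % s) := by linarith
  rw [h4, abs_neg, abs_of_nonneg h1]
  exact h2.le



/-- truncation step: For positive integers `m, n, s, r`, real `p ≥ 1`, an integer
matrix `C` and integer target `t`, let `C'` and `t'` be obtained by entrywise floor division
by `s`. Then for every `z ∈ ℤⁿ` with `max_j |z_j| ≤ r`,
`| s·‖C'z − t'‖_p − ‖Cz − t‖_p | ≤ m^{1/p} · s · (n·r + 1)`. -/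
theorem stmt_9 (m n s r : ℕ) (hm : 0 < m) (hn : 0 < n) (hs : 0 < s) (hr : 0 < r)
    (p : ℝ) (hp : 1 ≤ p)
    (C : Matrix (Fin m) (Fin n) ℤ) (t : Fin m → ℤ)
    (C' : Matrix (Fin m) (Fin n) ℤ) (hC' : ∀ i j, C' i j = Int.fdiv (C i j) s)
    (t' : Fin m → ℤ) (ht' : ∀ i, t' i = Int.fdiv (t i) s) :
    ∀ z : Fin n → ℤ, (∀ j, |z j| ≤ r) →
      |(s : ℝ) * (∑ i, |((C'.mulVec z - t') i : ℝ)| ^ p) ^ (1 / p)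
          - (∑ i, |((C.mulVec z - t) i : ℝ)| ^ p) ^ (1 / p)|
        ≤ (m : ℝ) ^ (1 / p) * s * (n * r + 1) := by
  intro z hz
  have hp0 : (0:ℝ) < p := lt_of_lt_of_le one_pos hp
  -- integer coordinatewise bound
  have key : ∀ i, |(s:ℤ) * ((C'.mulVec z - t') i) - (C.mulVec z - t) i|
      ≤ (s:ℤ) * (n * r + 1) := by
    intro i
    have hrw : (s:ℤ) * ((C'.mulVec z - t') i) - (C.mulVec z - t) i
        = (∑ j, (s * C' i j - C i j) * z j) - ((s:ℤ) * t' i - t i) := by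
      simp only [Pi.sub_apply, Matrix.mulVec, dotProduct, Finset.mul_sum,
        Finset.sum_sub_distrib, sub_mul, mul_assoc]
      ring_nf
      rw [Finset.mul_sum]
      ring
    rw [hrw]
    have hsum : |∑ j, (s * C' i j - C i j) * z j| ≤ (n:ℤ) * (s * r) := by
      calc |∑ j, (s * C' i j - C i j) * z j| ≤ ∑ j, |(s * C' i j - C i j) * z j| :=
            Finset.abs_sum_le_sum_abs _ _
        _ ≤ ∑ _j : Fin n, (s:ℤ) * r := by
            refine Finset.sum_le_sum fun j _ => ?_
            rw [abs_mul]
            have h1 : |(s:ℤ) * C' i j - C i j| ≤ s := by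
              rw [hC' i j]; exact aux_fdiv s (by exact_mod_cast hs) (C i j)
            exact mul_le_mul h1 (hz j) (abs_nonneg _) (by positivity)
        _ = (n:ℤ) * (s * r) := by simp [Finset.sum_const, mul_comm]
    have ht : |(s:ℤ) * t' i - t i| ≤ s := by
      rw [ht' i]; exact aux_fdiv s (by exact_mod_cast hs) (t i)
    calc |(∑ j, (s * C' i j - C i j) * z j) - ((s:ℤ) * t' i - t i)|
        ≤ |∑ j, (s * C' i j - C i j) * z j| + |(s:ℤ) * t' i - t i| := abs_sub _ _
      _ ≤ (n:ℤ) * (s * r) + s := add_le_add hsum ht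
      _ = (s:ℤ) * (n * r + 1) := by ring
  -- real version
  set u : Fin m → ℝ := fun i => (s:ℝ) * ((C'.mulVec z - t') i : ℤ) with hu
  set v : Fin m → ℝ := fun i => ((C.mulVec z - t) i : ℤ) with hv
  set B : ℝ := (s:ℝ) * (n * r + 1) with hB
  have keyR : ∀ i, |u i - v i| ≤ B := by
    intro i
    have h := key i
    rw [hu, hv, hB]
    beta_reduce
    push_cast
    exact_mod_cast h
  have hs0 : (0:ℝ) ≤ s := Nat.cast_nonneg s
  -- s * N(a) = N(u)
  have hNu : (s:ℝ) * (∑ i, |((C'.mulVec z - t') i : ℝ)| ^ p) ^ (1 / p)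
      = (∑ i, |u i| ^ p) ^ (1 / p) := by
    have h1 : ∀ i, |u i| ^ p = (s:ℝ) ^ p * |((C'.mulVec z - t') i : ℝ)| ^ p := by
      intro i
      rw [hu]
      rw [abs_mul, Real.mul_rpow (abs_nonneg _) (abs_nonneg _), abs_of_nonneg hs0]
    simp_rw [h1]
    rw [← Finset.mul_sum, Real.mul_rpow (Real.rpow_nonneg hs0 p)
      (Finset.sum_nonneg fun i _ => Real.rpow_nonneg (abs_nonneg _) p)]
    rw [← Real.rpow_mul hs0, mul_one_div_cancel hp0.ne', Real.rpow_one]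
  rw [hNu]
  -- Minkowski both ways
  have hNw : (∑ i, |u i - v i| ^ p) ^ (1 / p) ≤ (m:ℝ) ^ (1 / p) * B := by
    have hstep : ∑ i, |u i - v i| ^ p ≤ ∑ _i : Fin m, B ^ p :=
      Finset.sum_le_sum fun i _ => Real.rpow_le_rpow (abs_nonneg _) (keyR i) hp0.le
    have hBnn : (0:ℝ) ≤ B := by rw [hB]; positivity
    calc (∑ i, |u i - v i| ^ p) ^ (1 / p)
        ≤ (∑ _i : Fin m, B ^ p) ^ (1 / p) := by
          exact Real.rpow_le_rpow (Finset.sum_nonneg fun i _ => Real.rpow_nonneg (abs_nonneg _) p)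
            hstep (by positivity)
      _ = ((m:ℝ) * B ^ p) ^ (1 / p) := by
          rw [Finset.sum_const, Finset.card_univ, Fintype.card_fin, nsmul_eq_mul]
      _ = (m:ℝ) ^ (1 / p) * B := by
          rw [Real.mul_rpow (Nat.cast_nonneg m) (Real.rpow_nonneg hBnn p),
            ← Real.rpow_mul hBnn, mul_one_div_cancel hp0.ne', Real.rpow_one]
  have mink1 : (∑ i, |u i| ^ p) ^ (1 / p)
      ≤ (∑ i, |u i - v i| ^ p) ^ (1 / p) + (∑ i, |v i| ^ p) ^ (1 / p) := by
    have := Real.Lp_add_le Finset.univ (fun i => u i - v i) v hp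
    simpa using this
  have mink2 : (∑ i, |v i| ^ p) ^ (1 / p)
      ≤ (∑ i, |u i - v i| ^ p) ^ (1 / p) + (∑ i, |u i| ^ p) ^ (1 / p) := by
    have := Real.Lp_add_le Finset.univ (fun i => v i - u i) u hp
    have h2 : ∀ i, |v i - u i| = |u i - v i| := fun i => abs_sub_comm _ _
    simp only [sub_add_cancel] at this
    simpa [h2] using this
  rw [abs_sub_le_iff]
  have hgoal : (m:ℝ) ^ (1 / p) * s * (n * r + 1) = (m:ℝ) ^ (1 / p) * B := by
    rw [hB]; ring
  constructor
  · rw [hgoal]; linarith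
  · rw [hgoal]; linarith
end

section
/- Let m ≥ n ≥ 1, let b_1, …, b_n ∈ ℝ^m be linearly independent, and let L = {Σ_{i=1}^n z_i b_i : z_i ∈ ℤ}. For each i ∈ {1,…,n}, define φ_i : ℤ^n → ℝ^m by φ_i(z) = Σ_{j≠i} z_j b_j + (2 z_i − 1) b_i (this equals B_i z − b_i, where B_i is the basis b_1,…,b_n with b_i replaced by 2 b_i). Then ⋃_{i=1}^n φ_i(ℤ^n) = L \setminus 2L, where 2L = {2w : w ∈ L}. In particular, every vector of the form φ_i(z) is a nonzero element of L, and every v ∈ L that has at least one odd coefficient with respect to the basis b_1,…,b_n equals φ_i(z) for some i and z. -/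
lemma coeff_eq {n m : ℕ} {b : Fin n → Fin m → ℝ} (hb : LinearIndependent ℝ b)
    (a c : Fin n → ℤ) (h : ∑ j, (a j : ℝ) • b j = ∑ j, (c j : ℝ) • b j) : a = c := by
  have h0 : ∑ j, ((a j : ℝ) - (c j : ℝ)) • b j = 0 := by
    simp [sub_smul, Finset.sum_sub_distrib, h]
  have := Fintype.linearIndependent_iff.mp hb (fun j => (a j : ℝ) - (c j : ℝ)) h0
  funext j
  have hj : (a j : ℝ) = (c j : ℝ) := sub_eq_zero.mp (this j)
  exact_mod_cast hj

lemma phi_sum {n m : ℕ} (b : Fin n → Fin m → ℝ) (i : Fin n) (z : Fin n → ℤ) :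
    (∑ j ∈ Finset.univ.erase i, (z j : ℝ) • b j) + ((2 * z i - 1 : ℤ) : ℝ) • b i
      = ∑ j, ((Function.update z i (2 * z i - 1) j : ℤ) : ℝ) • b j := by
  rw [← Finset.add_sum_erase _ _ (Finset.mem_univ i)]
  rw [add_comm]
  congr 1
  · simp
  · apply Finset.sum_congr rfl
    intro j hj
    rw [Function.update_of_ne (Finset.ne_of_mem_erase hj)]

lemma two_smul_sum {n m : ℕ} (b : Fin n → Fin m → ℝ) (w : Fin n → ℤ) :
    (2 : ℝ) • ∑ j, (w j : ℝ) • b j = ∑ j, ((2 * w j : ℤ) : ℝ) • b j := by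
  rw [Finset.smul_sum]
  apply Finset.sum_congr rfl
  intro j _
  rw [smul_smul]
  push_cast
  ring_nf

/-- correctness of the SVP-to-CVP reduction: Let `b_1, …, b_n ∈ ℝ^m` be linearly
independent, generating the lattice `L`, and for each `i` let
`φ_i(z) = ∑_{j≠i} z_j b_j + (2 z_i − 1) b_i`. Then `⋃_i φ_i(ℤⁿ) = L \ 2L`; in particular every
`φ_i(z)` is a nonzero element of `L`, and every `v ∈ L` having at least one odd coefficient
with respect to `b_1, …, b_n` equals `φ_i(w)` for some `i` and `w`. -/
theorem stmt_12 (m n : ℕ) (hn : 1 ≤ n) (hmn : n ≤ m)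
    (b : Fin n → Fin m → ℝ) (hb : LinearIndependent ℝ b)
    (L : Set (Fin m → ℝ))
    (hL : L = {v | ∃ z : Fin n → ℤ, v = ∑ i, (z i : ℝ) • b i})
    (φ : Fin n → (Fin n → ℤ) → (Fin m → ℝ))
    (hφ : ∀ i z, φ i z = (∑ j ∈ Finset.univ.erase i, (z j : ℝ) • b j)
        + ((2 * z i - 1 : ℤ) : ℝ) • b i) :
    (⋃ i : Fin n, Set.range (φ i)) = L \ {v | ∃ u ∈ L, v = (2 : ℝ) • u} ∧
    (∀ i z, φ i z ∈ L ∧ φ i z ≠ 0) ∧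
    (∀ z : Fin n → ℤ, (∃ j, Odd (z j)) →
      ∃ i, ∃ w : Fin n → ℤ, φ i w = ∑ j, (z j : ℝ) • b j) := by
  have key : ∀ i z, φ i z = ∑ j, ((Function.update z i (2 * z i - 1) j : ℤ) : ℝ) • b j := by
    intro i z; rw [hφ, phi_sum]
  have memL : ∀ i z, φ i z ∈ L := by
    intro i z; rw [hL]; exact ⟨_, key i z⟩
  have ne0 : ∀ i z, φ i z ≠ 0 := by
    intro i z h0
    have h1 : φ i z = ∑ j, (((0 : Fin n → ℤ) j : ℤ) : ℝ) • b j := by simp [h0]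
    have := coeff_eq hb _ _ ((key i z).symm.trans h1)
    have := congrFun this i
    simp [Function.update_self] at this
    omega
  have clause3 : ∀ z : Fin n → ℤ, (∃ j, Odd (z j)) →
      ∃ i, ∃ w : Fin n → ℤ, φ i w = ∑ j, (z j : ℝ) • b j := by
    rintro z ⟨j, k, hk⟩
    refine ⟨j, Function.update z j ((z j + 1) / 2), ?_⟩
    rw [key]
    have hc : Function.update (Function.update z j ((z j + 1) / 2)) j
        (2 * Function.update z j ((z j + 1) / 2) j - 1) = z := by
      funext l
      by_cases hl : l = j
      · subst hl
        simp only [Function.update_self]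
        omega
      · simp [Function.update_of_ne hl]
    rw [hc]
  refine ⟨?_, fun i z => ⟨memL i z, ne0 i z⟩, clause3⟩
  ext v
  simp only [Set.mem_iUnion, Set.mem_range, Set.mem_diff, Set.mem_setOf_eq]
  constructor
  · rintro ⟨i, z, rfl⟩
    refine ⟨memL i z, ?_⟩
    rintro ⟨u, hu, hv⟩
    rw [hL] at hu
    obtain ⟨w, rfl⟩ := hu
    rw [two_smul_sum] at hv
    have := coeff_eq hb _ _ ((key i z).symm.trans hv)
    have := congrFun this i
    simp [Function.update_self] at this
    omega
  · rintro ⟨hv, hnv⟩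
    rw [hL] at hv
    obtain ⟨z, rfl⟩ := hv
    by_cases hodd : ∃ j, Odd (z j)
    · obtain ⟨i, w, hw⟩ := clause3 z hodd
      exact ⟨i, w, hw⟩
    · exfalso
      push_neg at hodd
      simp only [Int.not_odd_iff_even] at hodd
      apply hnv
      refine ⟨∑ j, ((z j / 2 : ℤ) : ℝ) • b j, ?_, ?_⟩
      · rw [hL]; exact ⟨_, rfl⟩
      · rw [two_smul_sum]
        apply Finset.sum_congr rfl
        intro j _
        obtain ⟨k, hk⟩ := hodd j
        rw [show (2 * (z j / 2) : ℤ) = z j by omega]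
end
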